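/- arXiv:1507.00807 — 9 statements merged into one kernel-verified Lean document; each statement's English description precedes it below -/
import Mathlib

section
/- Let a < b be real numbers, let w : [a,b] → [0,∞) be a concave function, and let f ∈ C²[a,b] satisfy f(a) = f(b) = 0. Then (∫ₐᵇ w(x) f'(x)² dx)² ≤ (∫ₐᵇ w(x) f(x)² dx) · (∫ₐᵇ w(x) f''(x)² dx). -/
/-!
Put `u = f²`. For concave `w` one has `∫ w u'' ≤ 0` whenever `u ≥ 0` and `u, u'` vanish at both
endpoints (this is `w'' ≤ 0` in the sense of distributions, tested against `u`). Since
`u'' = 2 f'² + 2 f f''`, this gives `∫ w f'² ≤ -∫ w f f''`, and the weighted Cauchy–Schwarz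
inequality bounds `(∫ w f f'')²` by `(∫ w f²) (∫ w f''²)`.

As `w` need not be differentiable, `∫ w u''` is approximated by
`h⁻² ∫ w(x) (u(x + h) - 2 u(x) + u(x - h)) dx`. A change of variables moves the second difference
onto `w`, where concavity makes it nonpositive; the price is a few boundary strips of width `h`,
which contribute `O(h³)` because `u` vanishes to second order at the endpoints.
-/

open Set MeasureTheory

theorem sq_integral_mul_le_integral_mul_sq {α : Type*} [MeasurableSpace α] {μ : Measure α}
    {w f g : α → ℝ} (hw : 0 ≤ᵐ[μ] w) (hf : Integrable (fun x => w x * f x ^ 2) μ)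
    (hg : Integrable (fun x => w x * g x ^ 2) μ)
    (hfg : Integrable (fun x => w x * (f x * g x)) μ) :
    (∫ x, w x * (f x * g x) ∂μ) ^ 2 ≤ (∫ x, w x * f x ^ 2 ∂μ) * ∫ x, w x * g x ^ 2 ∂μ := by
  have hquadratic : ∀ t : ℝ, 0 ≤ (∫ x, w x * f x ^ 2 ∂μ) * (t * t) +
      2 * (∫ x, w x * (f x * g x) ∂μ) * t + ∫ x, w x * g x ^ 2 ∂μ := fun t => by
    have h0 : 0 ≤ ∫ x, w x * (t * f x + g x) ^ 2 ∂μ :=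
      integral_nonneg_of_ae (hw.mono fun x hx => mul_nonneg hx (sq_nonneg _))
    have hexpand : ∫ x, w x * (t * f x + g x) ^ 2 ∂μ = (∫ x, w x * f x ^ 2 ∂μ) * (t * t) +
        2 * (∫ x, w x * (f x * g x) ∂μ) * t + ∫ x, w x * g x ^ 2 ∂μ := by
      rw [show (fun x => w x * (t * f x + g x) ^ 2) = fun x => w x * f x ^ 2 * (t * t) +
          (2 * t * (w x * (f x * g x)) + w x * g x ^ 2) from funext fun x => by ring,
        integral_add (hf.mul_const _) (by exact (hfg.const_mul (2 * t)).add hg),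
        integral_add (hfg.const_mul _) hg, integral_mul_const, integral_const_mul]
      ring
    linarith
  have := discrim_le_zero hquadratic
  rw [discrim] at this
  nlinarith

open intervalIntegral Filter Topology
open scoped Interval

namespace ConcaveOn

variable {s : Set ℝ} {w : ℝ → ℝ} {a b x y : ℝ}

theorem add_le_two_mul_midpoint (hw : ConcaveOn ℝ s w) (hx : x ∈ s) (hy : y ∈ s) :
    w x + w y ≤ 2 * w ((x + y) / 2) := by
  have h := hw.2 hx hy (by norm_num : (0 : ℝ) ≤ 1 / 2) (by norm_num : (0 : ℝ) ≤ 1 / 2)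
    (by norm_num)
  simp only [smul_eq_mul] at h
  rw [show 1 / 2 * x + 1 / 2 * y = (x + y) / 2 by ring] at h
  linarith

theorem exists_abs_le (hw : ConcaveOn ℝ (Icc a b) w) : ∃ M, ∀ x ∈ Icc a b, |w x| ≤ M := by
  set m := min (w a) (w b)
  refine ⟨|m| + |2 * w ((a + b) / 2) - m|, fun x hx => ?_⟩
  have hab : a ≤ b := hx.1.trans hx.2
  have hx' : a + b - x ∈ Icc a b := ⟨by linarith [hx.2], by linarith [hx.1]⟩
  have hlow : ∀ y ∈ Icc a b, m ≤ w y := fun y hy =>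
    hw.min_le_of_mem_Icc (left_mem_Icc.2 hab) (right_mem_Icc.2 hab) hy
  have hmid := hw.add_le_two_mul_midpoint hx hx'
  rw [show (x + (a + b - x)) / 2 = (a + b) / 2 by ring] at hmid
  exact abs_le.2 ⟨by linarith [hlow x hx, neg_abs_le m, abs_nonneg (2 * w ((a + b) / 2) - m)],
    by linarith [hlow _ hx', le_abs_self (2 * w ((a + b) / 2) - m), abs_nonneg m]⟩

theorem integrableOn_Icc (hw : ConcaveOn ℝ (Icc a b) w) : IntegrableOn w (Icc a b) := by
  obtain ⟨M, hM⟩ := hw.exists_abs_le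
  have hcont : ContinuousOn w (Ioo a b) := by simpa using hw.continuousOn_interior
  rw [integrableOn_Icc_iff_integrableOn_Ioo]
  exact .of_bound measure_Ioo_lt_top (hcont.aestronglyMeasurable measurableSet_Ioo) M
    ((ae_restrict_iff' measurableSet_Ioo).2
      (ae_of_all _ fun x hx => hM x (Ioo_subset_Icc_self hx)))

end ConcaveOn

namespace MeasureTheory.IntegrableOn

variable {w φ : ℝ → ℝ} {a b c d : ℝ}

theorem intervalIntegrable_mul_continuousOn (hw : IntegrableOn w (Icc a b)) (hcd : c ≤ d)
    (hc : a ≤ c) (hd : d ≤ b) (hφ : ContinuousOn φ (Icc c d)) :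
    IntervalIntegrable (fun x => w x * φ x) volume c d :=
  ((intervalIntegrable_iff_integrableOn_Icc_of_le hcd).2
    (hw.mono_set (Icc_subset_Icc hc hd))).mul_continuousOn (by rwa [uIcc_of_le hcd])

theorem intervalIntegrable_comp_add_mul_comp_add {u : ℝ → ℝ} {e e' : ℝ}
    (hw : IntegrableOn w (Icc a b)) (hu : ContinuousOn u (Icc a b)) (hcd : c ≤ d)
    (hc : a ≤ c + e) (hd : d + e ≤ b) (hc' : a ≤ c + e') (hd' : d + e' ≤ b) :
    IntervalIntegrable (fun y => w (y + e) * u (y + e')) volume c d := by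
  have hw' := ((intervalIntegrable_iff_integrableOn_Icc_of_le (by linarith)).2
    (hw.mono_set (Icc_subset_Icc hc hd))).comp_add_right e
  simp only [add_sub_cancel_right] at hw'
  refine hw'.mul_continuousOn ?_
  rw [uIcc_of_le hcd]
  exact hu.comp (continuous_add_const _).continuousOn
    fun y hy => ⟨by linarith [hy.1], by linarith [hy.2]⟩

end MeasureTheory.IntegrableOn

theorem intervalIntegral.integral_comp_add_right_eq_add_sub {F : ℝ → ℝ} {c d h : ℝ}
    (hshift : IntervalIntegrable F volume (c + h) (d + h))
    (hcd : IntervalIntegrable F volume c d) (hc : IntervalIntegrable F volume (c + h) c) :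
    ∫ x in c..d, F (x + h) =
      (∫ x in c..d, F x) + ((∫ x in d..(d + h), F x) - ∫ x in c..(c + h), F x) := by
  have hsub := integral_interval_sub_interval_comm' hshift hcd hc
  rw [integral_comp_add_right]
  linarith

theorem intervalIntegral.abs_integral_mul_le_of_abs_le {g v : ℝ → ℝ} {s t M C : ℝ}
    (hM : 0 ≤ M) (hg : ∀ y ∈ [[s, t]], |g y| ≤ M) (hv : ∀ y ∈ [[s, t]], |v y| ≤ C) :
    |∫ y in s..t, g y * v y| ≤ M * C * |t - s| :=
  norm_integral_le_of_norm_le_const (f := fun y => g y * v y) fun y hy => by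
    rw [norm_mul]
    exact mul_le_mul (hg y (uIoc_subset_uIcc hy)) (hv y (uIoc_subset_uIcc hy)) (abs_nonneg _) hM

theorem abs_le_mul_sq_of_hasDerivWithinAt {s : Set ℝ} (hs : Convex ℝ s) {u u' u'' : ℝ → ℝ}
    {L c x : ℝ} (hu : ∀ t ∈ s, HasDerivWithinAt u (u' t) s t)
    (hu' : ∀ t ∈ s, HasDerivWithinAt u' (u'' t) s t) (hL : ∀ t ∈ s, |u'' t| ≤ L)
    (hc : c ∈ s) (hx : x ∈ s) (huc : u c = 0) (hu'c : u' c = 0) :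
    |u x| ≤ L * (x - c) ^ 2 := by
  have hu'_le : ∀ t ∈ s, |u' t| ≤ L * |t - c| := fun t ht => by
    simpa [hu'c] using hs.norm_image_sub_le_of_norm_hasDerivWithin_le hu' hL hc ht
  have hL0 : 0 ≤ L := (abs_nonneg _).trans (hL c hc)
  have key := (hs.inter (convex_uIcc c x)).norm_image_sub_le_of_norm_hasDerivWithin_le
    (fun t ht => (hu t ht.1).mono inter_subset_left)
    (fun t ht => (hu'_le t ht.1).trans
      (mul_le_mul_of_nonneg_left (abs_sub_left_of_mem_uIcc ht.2) hL0))
    ⟨hc, left_mem_uIcc⟩ ⟨hx, right_mem_uIcc⟩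
  simpa [huc, mul_assoc, ← sq] using key

def secondDiff (u : ℝ → ℝ) (h x : ℝ) : ℝ := u (x + h) - 2 * u x + u (x - h)

theorem abs_secondDiff_sub_le {s : Set ℝ} (hs : Convex ℝ s) {u u' u'' : ℝ → ℝ} {x h ε : ℝ}
    (hu : ∀ t ∈ s, HasDerivWithinAt u (u' t) s t)
    (hu' : ∀ t ∈ s, HasDerivWithinAt u' (u'' t) s t) (hε : ∀ t ∈ s, |u'' t - u'' x| ≤ ε)
    (hx : x ∈ s) (hxp : x + h ∈ s) (hxm : x - h ∈ s) :
    |secondDiff u h x - h ^ 2 * u'' x| ≤ 2 * ε * h ^ 2 := by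
  -- the Taylor remainder of order two at `x`
  set v : ℝ → ℝ := fun t => u t - u x - (u' x * (t - x) + u'' x / 2 * (t - x) ^ 2)
  have hv : ∀ t ∈ s, HasDerivWithinAt v (u' t - u' x - u'' x * (t - x)) s t := fun t ht => by
    have hlin := ((hasDerivAt_id' t).sub_const x).const_mul (u' x)
    have hsq := (((hasDerivAt_id' t).sub_const x).pow 2).const_mul (u'' x / 2)
    exact (((hu t ht).sub_const (u x)).sub (hlin.add hsq).hasDerivWithinAt).congr_deriv
      (by push_cast; ring)
  have hv' : ∀ t ∈ s, HasDerivWithinAt (fun t => u' t - u' x - u'' x * (t - x))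
      (u'' t - u'' x) s t := fun t ht =>
    (((hu' t ht).sub_const (u' x)).sub
      ((((hasDerivAt_id' t).sub_const x).const_mul (u'' x)).hasDerivWithinAt)).congr_deriv
      (by ring)
  have hbound : ∀ y ∈ s, |v y| ≤ ε * (y - x) ^ 2 := fun y hy =>
    abs_le_mul_sq_of_hasDerivWithinAt hs hv hv' hε hx hy (by simp [v]) (by simp)
  calc |secondDiff u h x - h ^ 2 * u'' x| = |v (x + h) + v (x - h)| := by
        simp only [secondDiff, v]; ring_nf
    _ ≤ |v (x + h)| + |v (x - h)| := abs_add_le _ _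
    _ ≤ ε * (x + h - x) ^ 2 + ε * (x - h - x) ^ 2 := add_le_add (hbound _ hxp) (hbound _ hxm)
    _ = 2 * ε * h ^ 2 := by ring

theorem abs_deriv2_sub_secondDiff_div_sq_le {a b h ε x : ℝ} {u u' u'' : ℝ → ℝ}
    (hu : ∀ t ∈ Icc a b, HasDerivWithinAt u (u' t) (Icc a b) t)
    (hu' : ∀ t ∈ Icc a b, HasDerivWithinAt u' (u'' t) (Icc a b) t)
    (hε : ∀ s ∈ Icc a b, ∀ t ∈ Icc a b, |s - t| ≤ h → |u'' s - u'' t| ≤ ε)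
    (hh : 0 < h) (hx : x ∈ Icc (a + h) (b - h)) :
    |u'' x - secondDiff u h x / h ^ 2| ≤ 2 * ε := by
  have hxh : Icc (x - h) (x + h) ⊆ Icc a b :=
    Icc_subset_Icc (by linarith [hx.1]) (by linarith [hx.2])
  have key := abs_secondDiff_sub_le (convex_Icc (x - h) (x + h))
    (fun t ht => (hu t (hxh ht)).mono hxh) (fun t ht => (hu' t (hxh ht)).mono hxh)
    (fun t ht => hε t (hxh ht) x ⟨by linarith [hx.1], by linarith [hx.2]⟩
      (abs_sub_le_iff.2 ⟨by linarith [ht.2], by linarith [ht.1]⟩))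
    ⟨by linarith, by linarith⟩ ⟨by linarith, le_rfl⟩ ⟨le_rfl, by linarith⟩
  rw [show u'' x - secondDiff u h x / h ^ 2 = -(secondDiff u h x - h ^ 2 * u'' x) / h ^ 2 by
      field_simp; ring, abs_div, abs_neg, abs_of_pos (by positivity : (0 : ℝ) < h ^ 2),
    div_le_iff₀ (by positivity)]
  linarith

/-- The shifts `x ↦ x ± h` move the second difference from `u` onto `w`, where concavity makes
it nonpositive; what is left are the boundary strips on the right. -/
theorem ConcaveOn.integral_mul_secondDiff_le_boundary {a b h : ℝ} {w u : ℝ → ℝ}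
    (hw : ConcaveOn ℝ (Icc a b) w) (hu : ContinuousOn u (Icc a b))
    (hu0 : ∀ x ∈ Icc a b, 0 ≤ u x) (hh : 0 ≤ h) (h2h : 2 * h ≤ b - a) :
    ∫ x in (a + h)..(b - h), w x * secondDiff u h x ≤
      (∫ y in a..(a + h), w (y + h) * u y) + (∫ y in (b - h)..b, w (y - h) * u y) -
        ((∫ y in (a + h)..(a + 2 * h), w (y - h) * u y) +
          ∫ y in (b - 2 * h)..(b - h), w (y + h) * u y) := by
  have hint : ∀ {c d e e' : ℝ}, c ≤ d → a ≤ c + e → d + e ≤ b → a ≤ c + e' → d + e' ≤ b →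
      IntervalIntegrable (fun y => w (y + e) * u (y + e')) volume c d :=
    hw.integrableOn_Icc.intervalIntegrable_comp_add_mul_comp_add hu
  have iP : ∀ {c d}, c ≤ d → a + h ≤ c → d ≤ b →
      IntervalIntegrable (fun y => w (y - h) * u y) volume c d := fun hcd hc hd => by
    simpa [← sub_eq_add_neg] using
      hint (e := -h) (e' := 0) hcd (by linarith) (by linarith) (by linarith) (by linarith)
  have iM : ∀ {c d}, c ≤ d → a ≤ c → d ≤ b - h →
      IntervalIntegrable (fun y => w (y + h) * u y) volume c d := fun hcd hc hd => by
    simpa using hint (e := h) (e' := 0) hcd (by linarith) (by linarith) (by linarith) (by linarith)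
  have iG : IntervalIntegrable (fun y => w y * u y) volume (a + h) (b - h) := by
    simpa using hint (e := 0) (e' := 0) (by linarith) (by linarith) (by linarith) (by linarith)
      (by linarith)
  have iR : IntervalIntegrable (fun x => w x * u (x + h)) volume (a + h) (b - h) := by
    simpa using hint (e := 0) (e' := h) (by linarith) (by linarith) (by linarith) (by linarith)
      (by linarith)
  have iL : IntervalIntegrable (fun x => w x * u (x - h)) volume (a + h) (b - h) := by
    simpa [← sub_eq_add_neg] using hint (e := 0) (e' := -h) (by linarith) (by linarith)
      (by linarith) (by linarith) (by linarith)
  have hsplit : ∫ x in (a + h)..(b - h), w x * secondDiff u h x =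
      (∫ x in (a + h)..(b - h), w x * u (x + h)) + (∫ x in (a + h)..(b - h), w x * u (x - h)) -
        2 * ∫ x in (a + h)..(b - h), w x * u x := by
    rw [← integral_add iR iL, ← intervalIntegral.integral_const_mul,
      ← integral_sub (iR.add iL) (iG.const_mul 2)]
    exact integral_congr fun x _ => by simp only [secondDiff]; ring
  have hshiftR := integral_comp_add_right_eq_add_sub (F := fun y => w (y - h) * u y) (h := h)
    (iP (c := a + h + h) (d := b - h + h) (by linarith) (by linarith) (by linarith))
    (iP (by linarith) le_rfl (by linarith)) (iP (by linarith) le_rfl (by linarith)).symm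
  have hshiftL := integral_comp_add_right_eq_add_sub (F := fun y => w (y + h) * u y) (h := -h)
    (iM (c := a + h + -h) (d := b - h + -h) (by linarith) (by linarith) (by linarith))
    (iM (by linarith) (by linarith) le_rfl)
    (iM (c := a + h + -h) (by linarith) (by linarith) (by linarith))
  simp only [add_sub_cancel_right] at hshiftR
  simp only [← sub_eq_add_neg, sub_add_cancel] at hshiftL
  rw [show b - h + h = b by ring, show a + h + h = a + 2 * h by ring] at hshiftR
  rw [integral_symm (b - h - h) (b - h), integral_symm (a + h - h) (a + h),
    show b - h - h = b - 2 * h by ring, show a + h - h = a by ring] at hshiftL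
  have hconc := integral_mono_on (by linarith : a + h ≤ b - h)
    ((iP (by linarith) le_rfl (by linarith)).add (iM (by linarith) (by linarith) le_rfl))
    (iG.const_mul 2) fun y hy => by
      have hmid := hw.add_le_two_mul_midpoint (x := y - h) (y := y + h)
        ⟨by linarith [hy.1], by linarith [hy.2]⟩ ⟨by linarith [hy.1], by linarith [hy.2]⟩
      rw [show (y - h + (y + h)) / 2 = y by ring] at hmid
      nlinarith [hu0 y ⟨by linarith [hy.1], by linarith [hy.2]⟩]
  rw [integral_add (iP (by linarith) le_rfl (by linarith)) (iM (by linarith) (by linarith) le_rfl),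
    intervalIntegral.integral_const_mul] at hconc
  linarith

theorem ConcaveOn.integral_mul_secondDiff_le {a b M L h : ℝ} {w u : ℝ → ℝ}
    (hw : ConcaveOn ℝ (Icc a b) w) (hM : ∀ x ∈ Icc a b, |w x| ≤ M)
    (hu : ContinuousOn u (Icc a b)) (hu0 : ∀ x ∈ Icc a b, 0 ≤ u x)
    (hua : ∀ x ∈ Icc a b, u x ≤ L * (x - a) ^ 2) (hub : ∀ x ∈ Icc a b, u x ≤ L * (x - b) ^ 2)
    (hh : 0 < h) (h2h : 2 * h ≤ b - a) :
    ∫ x in (a + h)..(b - h), w x * secondDiff u h x ≤ 16 * M * L * h ^ 3 := by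
  have hL : 0 ≤ L := (mul_nonneg_iff_of_pos_right (by nlinarith : 0 < (b - a) ^ 2)).1
    ((hu0 b ⟨by linarith, le_rfl⟩).trans (hua b ⟨by linarith, le_rfl⟩))
  have hM0 : 0 ≤ M := (abs_nonneg _).trans (hM a ⟨le_rfl, by linarith⟩)
  have hnear : ∀ y ∈ Icc a b, (y ≤ a + 2 * h ∨ b - 2 * h ≤ y) → |u y| ≤ 4 * L * h ^ 2 := by
    intro y hy hend
    rw [abs_of_nonneg (hu0 y hy)]
    rcases hend with hend | hend
    · calc u y ≤ L * (y - a) ^ 2 := hua y hy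
        _ ≤ L * (2 * h) ^ 2 := by gcongr <;> linarith [hy.1]
        _ = 4 * L * h ^ 2 := by ring
    · calc u y ≤ L * (b - y) ^ 2 := (hub y hy).trans_eq (by ring)
        _ ≤ L * (2 * h) ^ 2 := by gcongr <;> linarith [hy.2]
        _ = 4 * L * h ^ 2 := by ring
  have hstrip : ∀ (g : ℝ → ℝ) (s t : ℝ), a ≤ s → s ≤ t → t ≤ b → t - s ≤ h →
      (t ≤ a + 2 * h ∨ b - 2 * h ≤ s) → (∀ y ∈ Icc s t, |g y| ≤ M) →
      |∫ y in s..t, g y * u y| ≤ 4 * M * L * h ^ 3 := fun g s t hs hst ht hsth hend hg => by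
    have hML : 0 ≤ M * (4 * L * h ^ 2) := mul_nonneg hM0 ((abs_nonneg _).trans
      (hnear s ⟨hs, hst.trans ht⟩ (hend.imp (fun h' => hst.trans h') id)))
    calc |∫ y in s..t, g y * u y| ≤ M * (4 * L * h ^ 2) * |t - s| :=
          abs_integral_mul_le_of_abs_le hM0 (by rwa [uIcc_of_le hst]) fun y hy => by
            rw [uIcc_of_le hst] at hy
            exact hnear y ⟨hs.trans hy.1, hy.2.trans ht⟩
              (hend.imp (fun h' => hy.2.trans h') (fun h' => h'.trans hy.1))
      _ ≤ M * (4 * L * h ^ 2) * h := by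
        rw [abs_of_nonneg (by linarith)]
        exact mul_le_mul_of_nonneg_left hsth hML
      _ = 4 * M * L * h ^ 3 := by ring
  have hwR : ∀ s t, a + h ≤ s → t ≤ b → ∀ y ∈ Icc s t, |w (y - h)| ≤ M :=
    fun s t hs ht y hy => hM _ ⟨by linarith [hy.1], by linarith [hy.2]⟩
  have hwL : ∀ s t, a ≤ s → t + h ≤ b → ∀ y ∈ Icc s t, |w (y + h)| ≤ M :=
    fun s t hs ht y hy => hM _ ⟨by linarith [hy.1], by linarith [hy.2]⟩
  have s₁ := hstrip _ a (a + h) le_rfl (by linarith) (by linarith) (by linarith)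
    (Or.inl (by linarith)) (hwL a (a + h) le_rfl (by linarith))
  have s₂ := hstrip _ (b - h) b (by linarith) (by linarith) le_rfl (by linarith)
    (Or.inr (by linarith)) (hwR (b - h) b (by linarith) le_rfl)
  have s₃ := hstrip _ (a + h) (a + 2 * h) (by linarith) (by linarith) (by linarith)
    (by linarith) (Or.inl le_rfl) (hwR (a + h) (a + 2 * h) le_rfl (by linarith))
  have s₄ := hstrip _ (b - 2 * h) (b - h) (by linarith) (by linarith) (by linarith)
    (by linarith) (Or.inr le_rfl) (hwL (b - 2 * h) (b - h) (by linarith) (by linarith))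
  rw [abs_le] at s₁ s₂ s₃ s₄
  linarith [hw.integral_mul_secondDiff_le_boundary hu hu0 hh.le h2h]

theorem ConcaveOn.integral_interior_mul_deriv2_le {a b M L h ε : ℝ} {w u u' u'' : ℝ → ℝ}
    (hw : ConcaveOn ℝ (Icc a b) w) (hM : ∀ x ∈ Icc a b, |w x| ≤ M)
    (hu : ∀ x ∈ Icc a b, HasDerivWithinAt u (u' x) (Icc a b) x)
    (hu' : ∀ x ∈ Icc a b, HasDerivWithinAt u' (u'' x) (Icc a b) x)
    (hu''c : ContinuousOn u'' (Icc a b)) (hu0 : ∀ x ∈ Icc a b, 0 ≤ u x)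
    (hua : ∀ x ∈ Icc a b, u x ≤ L * (x - a) ^ 2) (hub : ∀ x ∈ Icc a b, u x ≤ L * (x - b) ^ 2)
    (hh : 0 < h) (h2h : 2 * h ≤ b - a)
    (hε : ∀ s ∈ Icc a b, ∀ t ∈ Icc a b, |s - t| ≤ h → |u'' s - u'' t| ≤ ε) :
    ∫ x in (a + h)..(b - h), w x * u'' x ≤ 16 * M * L * h + 2 * M * ε * (b - a) := by
  have hM0 : 0 ≤ M := (abs_nonneg _).trans (hM a ⟨le_rfl, by linarith⟩)
  have hε0 : 0 ≤ ε :=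
    (abs_nonneg _).trans (hε a ⟨le_rfl, by linarith⟩ a ⟨le_rfl, by linarith⟩ (by simp [hh.le]))
  have huc : ContinuousOn u (Icc a b) := fun x hx => (hu x hx).continuousWithinAt
  have hsub : Icc (a + h) (b - h) ⊆ Icc a b := Icc_subset_Icc (by linarith) (by linarith)
  have hsd : ContinuousOn (secondDiff u h) (Icc (a + h) (b - h)) :=
    ((huc.comp (continuous_add_const h).continuousOn fun x hx =>
        ⟨by linarith [hx.1], by linarith [hx.2]⟩).sub
      (continuousOn_const.mul (huc.mono hsub))).add
      (huc.comp (continuous_sub_right h).continuousOn fun x hx =>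
        ⟨by linarith [hx.1], by linarith [hx.2]⟩)
  have iD := hw.integrableOn_Icc.intervalIntegrable_mul_continuousOn
    (by linarith : a + h ≤ b - h) (by linarith) (by linarith) hsd
  have iE : IntervalIntegrable (fun x => w x * (u'' x - secondDiff u h x / h ^ 2)) volume
      (a + h) (b - h) := hw.integrableOn_Icc.intervalIntegrable_mul_continuousOn
    (by linarith) (by linarith) (by linarith) ((hu''c.mono hsub).sub (hsd.div_const (h ^ 2)))
  have hsplit : ∫ x in (a + h)..(b - h), w x * u'' x =
      (∫ x in (a + h)..(b - h), w x * (u'' x - secondDiff u h x / h ^ 2)) +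
        (∫ x in (a + h)..(b - h), w x * secondDiff u h x) / h ^ 2 := by
    rw [← intervalIntegral.integral_div (h ^ 2) (fun x => w x * secondDiff u h x),
      ← integral_add iE (iD.div_const _)]
    exact integral_congr fun x _ => by field_simp; ring
  have happrox := abs_integral_mul_le_of_abs_le (s := a + h) (t := b - h) (C := 2 * ε) hM0
    (fun x hx => hM x (hsub (by rwa [uIcc_of_le (by linarith)] at hx))) fun x hx =>
      abs_deriv2_sub_secondDiff_div_sq_le hu hu' hε hh (by rwa [uIcc_of_le (by linarith)] at hx)
  rw [abs_of_nonneg (by linarith : 0 ≤ b - h - (a + h))] at happrox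
  have hconc := hw.integral_mul_secondDiff_le hM huc hu0 hua hub hh h2h
  have hdiv : (∫ x in (a + h)..(b - h), w x * secondDiff u h x) / h ^ 2 ≤ 16 * M * L * h := by
    rw [div_le_iff₀ (by positivity)]
    linarith
  nlinarith [le_abs_self (∫ x in (a + h)..(b - h), w x * (u'' x - secondDiff u h x / h ^ 2)),
    mul_nonneg hM0 hε0]

theorem ConcaveOn.integral_mul_deriv2_le {a b M L h ε : ℝ} {w u u' u'' : ℝ → ℝ}
    (hw : ConcaveOn ℝ (Icc a b) w) (hM : ∀ x ∈ Icc a b, |w x| ≤ M)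
    (hu : ∀ x ∈ Icc a b, HasDerivWithinAt u (u' x) (Icc a b) x)
    (hu' : ∀ x ∈ Icc a b, HasDerivWithinAt u' (u'' x) (Icc a b) x)
    (hu''c : ContinuousOn u'' (Icc a b)) (hL : ∀ x ∈ Icc a b, |u'' x| ≤ L)
    (hu0 : ∀ x ∈ Icc a b, 0 ≤ u x)
    (hua : ∀ x ∈ Icc a b, u x ≤ L * (x - a) ^ 2) (hub : ∀ x ∈ Icc a b, u x ≤ L * (x - b) ^ 2)
    (hh : 0 < h) (h2h : 2 * h ≤ b - a)
    (hε : ∀ s ∈ Icc a b, ∀ t ∈ Icc a b, |s - t| ≤ h → |u'' s - u'' t| ≤ ε) :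
    ∫ x in a..b, w x * u'' x ≤ 18 * M * L * h + 2 * M * ε * (b - a) := by
  have hM0 : 0 ≤ M := (abs_nonneg _).trans (hM a ⟨le_rfl, by linarith⟩)
  have hend : ∀ s t, a ≤ s → s ≤ t → t ≤ b → t - s ≤ h →
      IntervalIntegrable (fun x => w x * u'' x) volume s t ∧
        ∫ x in s..t, w x * u'' x ≤ M * L * h := fun s t hs hst ht hsth => by
    have hst' : ∀ x ∈ [[s, t]], x ∈ Icc a b := fun x hx => by
      rw [uIcc_of_le hst] at hx
      exact ⟨hs.trans hx.1, hx.2.trans ht⟩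
    refine ⟨hw.integrableOn_Icc.intervalIntegrable_mul_continuousOn hst hs ht
      (hu''c.mono (Icc_subset_Icc hs ht)), ?_⟩
    have hbound := abs_integral_mul_le_of_abs_le hM0 (fun x hx => hM x (hst' x hx))
      fun x hx => hL x (hst' x hx)
    rw [abs_of_nonneg (by linarith : (0 : ℝ) ≤ t - s)] at hbound
    nlinarith [le_abs_self (∫ x in s..t, w x * u'' x),
      mul_nonneg hM0 ((abs_nonneg _).trans (hL a ⟨le_rfl, by linarith⟩))]
  obtain ⟨i₁, e₁⟩ := hend a (a + h) le_rfl (by linarith) (by linarith) (by linarith)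
  obtain ⟨i₃, e₃⟩ := hend (b - h) b (by linarith) (by linarith) le_rfl (by linarith)
  have i₂ := hw.integrableOn_Icc.intervalIntegrable_mul_continuousOn (by linarith : a + h ≤ b - h)
    (by linarith) (by linarith) (hu''c.mono (Icc_subset_Icc (by linarith) (by linarith)))
  rw [← integral_add_adjacent_intervals (i₁.trans i₂) i₃, ← integral_add_adjacent_intervals i₁ i₂]
  linarith [hw.integral_interior_mul_deriv2_le hM hu hu' hu''c hu0 hua hub hh h2h hε]

theorem ConcaveOn.integral_mul_deriv2_nonpos {a b : ℝ} {w u u' u'' : ℝ → ℝ} (hab : a < b)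
    (hw : ConcaveOn ℝ (Icc a b) w)
    (hu : ∀ x ∈ Icc a b, HasDerivWithinAt u (u' x) (Icc a b) x)
    (hu' : ∀ x ∈ Icc a b, HasDerivWithinAt u' (u'' x) (Icc a b) x)
    (hu''c : ContinuousOn u'' (Icc a b)) (hu0 : ∀ x ∈ Icc a b, 0 ≤ u x)
    (hua : u a = 0) (hub : u b = 0) (hu'a : u' a = 0) (hu'b : u' b = 0) :
    ∫ x in a..b, w x * u'' x ≤ 0 := by
  obtain ⟨M, hM⟩ := hw.exists_abs_le
  obtain ⟨L, hL⟩ := isCompact_Icc.exists_bound_of_continuousOn hu''c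
  have hML : 0 ≤ M * L := mul_nonneg ((abs_nonneg _).trans (hM a ⟨le_rfl, hab.le⟩))
    ((norm_nonneg _).trans (hL a ⟨le_rfl, hab.le⟩))
  have hquad : ∀ c ∈ Icc a b, u c = 0 → u' c = 0 → ∀ x ∈ Icc a b, u x ≤ L * (x - c) ^ 2 :=
    fun c hc huc hu'c x hx => (le_abs_self _).trans
      (abs_le_mul_sq_of_hasDerivWithinAt (convex_Icc a b) hu hu' hL hc hx huc hu'c)
  have hUC := Metric.uniformContinuousOn_iff_le.1
    (isCompact_Icc.uniformContinuousOn_of_continuous hu''c)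
  set K := 18 * M * L + 2 * M * (b - a)
  have hK : Tendsto (fun ε => K * ε) (𝓝[>] 0) (𝓝 0) := by
    simpa using tendsto_nhdsWithin_of_tendsto_nhds ((continuous_const_mul K).tendsto 0)
  refine ge_of_tendsto hK (eventually_nhdsWithin_of_forall fun ε (hε : 0 < ε) => ?_)
  obtain ⟨δ, hδ, hδu⟩ := hUC ε hε
  set h := min (min δ ε) ((b - a) / 2)
  have hh : 0 < h := lt_min (lt_min hδ hε) (by linarith)
  have hhδ : h ≤ δ := (min_le_left _ _).trans (min_le_left _ _)
  have hhε : h ≤ ε := (min_le_left _ _).trans (min_le_right _ _)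
  calc ∫ x in a..b, w x * u'' x ≤ 18 * M * L * h + 2 * M * ε * (b - a) :=
        hw.integral_mul_deriv2_le hM hu hu' hu''c hL hu0
          (hquad a ⟨le_rfl, hab.le⟩ hua hu'a) (hquad b ⟨hab.le, le_rfl⟩ hub hu'b) hh
          (by linarith [min_le_right (min δ ε) ((b - a) / 2)])
          fun s hs t ht hst => hδu s hs t ht (hst.trans hhδ)
    _ ≤ K * ε := by nlinarith

theorem ConcaveOn.integral_mul_deriv_sq_le {a b : ℝ} {w f f' f'' : ℝ → ℝ} (hab : a < b)
    (hw : ConcaveOn ℝ (Icc a b) w)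
    (hf : ∀ x ∈ Icc a b, HasDerivWithinAt f (f' x) (Icc a b) x)
    (hf' : ∀ x ∈ Icc a b, HasDerivWithinAt f' (f'' x) (Icc a b) x)
    (hf''c : ContinuousOn f'' (Icc a b)) (hfa : f a = 0) (hfb : f b = 0) :
    ∫ x in a..b, w x * f' x ^ 2 ≤ -∫ x in a..b, w x * (f x * f'' x) := by
  have hfc : ContinuousOn f (Icc a b) := fun x hx => (hf x hx).continuousWithinAt
  have hf'c : ContinuousOn f' (Icc a b) := fun x hx => (hf' x hx).continuousWithinAt
  have hsq := hw.integral_mul_deriv2_nonpos hab (u := fun x => f x * f x)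
    (u' := fun x => 2 * f x * f' x) (u'' := fun x => 2 * (f' x ^ 2 + f x * f'' x))
    (fun x hx => ((hf x hx).mul (hf x hx)).congr_deriv (by ring))
    (fun x hx => (((hf x hx).const_mul 2).mul (hf' x hx)).congr_deriv (by ring))
    (continuousOn_const.mul ((hf'c.pow 2).add (hfc.mul hf''c))) (fun x _ => mul_self_nonneg _)
    (by simp [hfa]) (by simp [hfb]) (by simp [hfa]) (by simp [hfb])
  have i₁ : IntervalIntegrable (fun x => w x * f' x ^ 2) volume a b :=
    hw.integrableOn_Icc.intervalIntegrable_mul_continuousOn hab.le le_rfl le_rfl (hf'c.pow 2)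
  have i₂ : IntervalIntegrable (fun x => w x * (f x * f'' x)) volume a b :=
    hw.integrableOn_Icc.intervalIntegrable_mul_continuousOn hab.le le_rfl le_rfl (hfc.mul hf''c)
  have hsplit : ∫ x in a..b, w x * (2 * (f' x ^ 2 + f x * f'' x)) =
      2 * (∫ x in a..b, w x * f' x ^ 2) + 2 * ∫ x in a..b, w x * (f x * f'' x) := by
    rw [← intervalIntegral.integral_const_mul, ← intervalIntegral.integral_const_mul,
      ← integral_add (i₁.const_mul 2) (i₂.const_mul 2)]
    exact integral_congr fun x _ => by ring
  linarith

/-- Hardy–Littlewood integral inequality on a finite interval with a concave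
weight: for concave `w : [a,b] → [0,∞)` and `f ∈ C²[a,b]` with
`f a = f b = 0`, `(∫ₐᵇ w f'²)² ≤ (∫ₐᵇ w f²) (∫ₐᵇ w f''²)`. -/
theorem hardy_littlewood_concave_weight
    (a b : ℝ) (hab : a < b) (w f f' f'' : ℝ → ℝ)
    (hw0 : ∀ x ∈ Set.Icc a b, 0 ≤ w x)
    (hwconc : ConcaveOn ℝ (Set.Icc a b) w)
    (hf' : ∀ x ∈ Set.Icc a b, HasDerivWithinAt f (f' x) (Set.Icc a b) x)
    (hf'' : ∀ x ∈ Set.Icc a b, HasDerivWithinAt f' (f'' x) (Set.Icc a b) x)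
    (hf''cont : ContinuousOn f'' (Set.Icc a b))
    (hfa : f a = 0) (hfb : f b = 0) :
    (∫ x in a..b, w x * f' x ^ 2) ^ 2 ≤
      (∫ x in a..b, w x * f x ^ 2) * (∫ x in a..b, w x * f'' x ^ 2) := by
  have hfc : ContinuousOn f (Icc a b) := fun x hx => (hf' x hx).continuousWithinAt
  have hint : ∀ {φ : ℝ → ℝ}, ContinuousOn φ (Icc a b) →
      Integrable (fun x => w x * φ x) (volume.restrict (Ioc a b)) := fun hφ =>
    (hwconc.integrableOn_Icc.mul_continuousOn hφ isCompact_Icc).mono_set Ioc_subset_Icc_self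
  have hP : 0 ≤ ∫ x in a..b, w x * f' x ^ 2 :=
    integral_nonneg hab.le fun x hx => mul_nonneg (hw0 x hx) (sq_nonneg _)
  have hCS : (∫ x in a..b, w x * (f x * f'' x)) ^ 2 ≤
      (∫ x in a..b, w x * f x ^ 2) * ∫ x in a..b, w x * f'' x ^ 2 := by
    simp only [integral_of_le hab.le]
    exact sq_integral_mul_le_integral_mul_sq ((ae_restrict_iff' measurableSet_Ioc).2
        (ae_of_all _ fun x hx => hw0 x (Ioc_subset_Icc_self hx)))
      (hint (hfc.pow 2)) (hint (hf''cont.pow 2)) (hint (hfc.mul hf''cont))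
  nlinarith [hwconc.integral_mul_deriv_sq_le hab hf' hf'' hf''cont hfa hfb]
end

section
/- Let a < b be real numbers, let n be a natural number ≥ 1 and λ a real number, and set f(x) = λ sin(nπ(x−a)/(b−a)). Let w : [a,b] → [0,∞) be a concave function that is linear (affine) on each of the subintervals J_k = [a + (k−1)(b−a)/n, a + k(b−a)/n], k = 1, …, n. Then (∫ₐᵇ w(x) f'(x)² dx)² = (∫ₐᵇ w(x) f(x)² dx) · (∫ₐᵇ w(x) f''(x)² dx). -/
/-!
With `c = nπ/(b-a)` we have `f = λ sin(c(x-a))`, `f' = λc cos(c(x-a))` and `f'' = -c² f`, so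
`∫ w f''² = c⁴ λ² S` and `∫ w f² = λ² S` with `S = ∫ w sin²(c(x-a))`, while
`∫ w f'² = λ²c² (S + ∫ w cos(2c(x-a)))` because `cos² = sin² + cos 2·`. Equality thus reduces to
`∫ w cos(2c(x-a)) = 0`. On each `J_k` the cosine runs through a full period and `w` is affine
there; integrating by parts, the boundary terms of `∫ (αx+β) cos` cancel between the endpoints.
-/

open Real MeasureTheory intervalIntegral Set

theorem integral_affine_mul_cos_eq_zero {ω a p q : ℝ} (hω : ω ≠ 0) (α β : ℝ) {j m : ℤ}
    (hp : ω * (p - a) = j * (2 * π)) (hq : ω * (q - a) = m * (2 * π)) :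
    ∫ x in p..q, (α * x + β) * cos (ω * (x - a)) = 0 := by
  set F : ℝ → ℝ := fun x =>
    (α * x + β) * sin (ω * (x - a)) / ω + α * cos (ω * (x - a)) / ω ^ 2
  have hF : ∀ x, HasDerivAt F ((α * x + β) * cos (ω * (x - a))) x := by
    intro x
    have hphase : HasDerivAt (fun x => ω * (x - a)) ω x := by
      simpa using ((hasDerivAt_id x).sub_const a).const_mul ω
    have haffine : HasDerivAt (fun x => α * x + β) α x := by
      simpa using ((hasDerivAt_id x).const_mul α).add_const β
    refine (((haffine.mul hphase.sin).div_const ω).add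
      ((hphase.cos.const_mul α).div_const (ω ^ 2))).congr_deriv ?_
    field_simp
    ring
  -- `sin` vanishes and `cos` equals `1` at both endpoints, so `F p = F q = α / ω²`.
  have hF_eq : ∀ y (i : ℤ), ω * (y - a) = i * (2 * π) → F y = α / ω ^ 2 := by
    intro y i hy
    simp only [F, hy]
    rw [cos_int_mul_two_pi, show (i : ℝ) * (2 * π) = (2 * i : ℤ) * π by push_cast; ring,
      sin_int_mul_pi]
    ring
  rw [integral_eq_sub_of_hasDerivAt (fun x _ => hF x)
    (Continuous.intervalIntegrable (by fun_prop) _ _), hF_eq q m hq, hF_eq p j hp, sub_self]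

def IsPiecewiseAffine (w : ℝ → ℝ) (t : ℕ → ℝ) (n : ℕ) : Prop :=
  ∀ k < n, ∃ α β : ℝ, ∀ x ∈ Icc (t k) (t (k + 1)), w x = α * x + β

namespace IsPiecewiseAffine

variable {w : ℝ → ℝ} {t : ℕ → ℝ} {n : ℕ}

theorem exists_eqOn_uIcc (hw : IsPiecewiseAffine w t n) (ht : Monotone t) {k : ℕ} (hk : k < n) :
    ∃ α β : ℝ, EqOn w (fun x => α * x + β) (uIcc (t k) (t (k + 1))) := by
  obtain ⟨α, β, h⟩ := hw k hk
  exact ⟨α, β, by rwa [uIcc_of_le (ht k.le_succ)]⟩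

theorem intervalIntegrable_mul_of_lt (hw : IsPiecewiseAffine w t n) (ht : Monotone t)
    {g : ℝ → ℝ} (hg : Continuous g) {k : ℕ} (hk : k < n) :
    IntervalIntegrable (fun x => w x * g x) volume (t k) (t (k + 1)) := by
  obtain ⟨α, β, h⟩ := hw.exists_eqOn_uIcc ht hk
  refine (Continuous.intervalIntegrable (u := fun x => (α * x + β) * g x) (by fun_prop) _ _).congr
    fun x hx => ?_
  simp only [h (uIoc_subset_uIcc hx)]

theorem intervalIntegrable_mul (hw : IsPiecewiseAffine w t n) (ht : Monotone t)
    {g : ℝ → ℝ} (hg : Continuous g) :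
    IntervalIntegrable (fun x => w x * g x) volume (t 0) (t n) :=
  IntervalIntegrable.trans_iterate fun _ hk => hw.intervalIntegrable_mul_of_lt ht hg hk

theorem integral_mul_cos_eq_zero (hw : IsPiecewiseAffine w t n) (ht : Monotone t)
    {ω a : ℝ} (hω : ω ≠ 0) (hnodes : ∀ k ≤ n, ∃ j : ℤ, ω * (t k - a) = j * (2 * π)) :
    ∫ x in t 0..t n, w x * cos (ω * (x - a)) = 0 := by
  rw [← sum_integral_adjacent_intervals (a := t) fun k hk =>
    hw.intervalIntegrable_mul_of_lt ht (by fun_prop) hk]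
  refine Finset.sum_eq_zero fun k hk => ?_
  have hk : k < n := Finset.mem_range.mp hk
  obtain ⟨α, β, h⟩ := hw.exists_eqOn_uIcc ht hk
  obtain ⟨j, hj⟩ := hnodes k hk.le
  obtain ⟨m, hm⟩ := hnodes (k + 1) hk
  rw [integral_congr (g := fun x => (α * x + β) * cos (ω * (x - a))) fun x hx => by
    simp only [h hx]]
  exact integral_affine_mul_cos_eq_zero hω α β hj hm

end IsPiecewiseAffine

theorem deriv_const_mul_sin_mul_sub (lam c a : ℝ) :
    deriv (fun x => lam * sin (c * (x - a))) = fun x => lam * c * cos (c * (x - a)) := by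
  ext x
  rw [((((hasDerivAt_id' x).sub_const a).const_mul c).sin.const_mul lam).deriv]
  ring

theorem deriv_const_mul_cos_mul_sub (lam c a : ℝ) :
    deriv (fun x => lam * cos (c * (x - a))) = fun x => -(lam * c) * sin (c * (x - a)) := by
  ext x
  rw [((((hasDerivAt_id' x).sub_const a).const_mul c).cos.const_mul lam).deriv]
  ring

theorem sq_integral_mul_deriv_sq_eq_of_integral_mul_cos_eq_zero {w f : ℝ → ℝ} {p q lam c a : ℝ}
    (hf : f = fun x => lam * sin (c * (x - a)))
    (hsin : IntervalIntegrable (fun x => w x * sin (c * (x - a)) ^ 2) volume p q)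
    (hcos : IntervalIntegrable (fun x => w x * cos (2 * c * (x - a))) volume p q)
    (hK : ∫ x in p..q, w x * cos (2 * c * (x - a)) = 0) :
    (∫ x in p..q, w x * deriv f x ^ 2) ^ 2 =
      (∫ x in p..q, w x * f x ^ 2) * ∫ x in p..q, w x * deriv (deriv f) x ^ 2 := by
  set S := ∫ x in p..q, w x * sin (c * (x - a)) ^ 2
  have hI₀ : ∫ x in p..q, w x * f x ^ 2 = lam ^ 2 * S := by
    rw [← intervalIntegral.integral_const_mul]
    exact integral_congr fun x _ => by simp only [hf]; ring
  have hI₁ : ∫ x in p..q, w x * deriv f x ^ 2 = lam ^ 2 * c ^ 2 * S := by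
    rw [← add_zero S, ← hK, ← integral_add hsin hcos, ← intervalIntegral.integral_const_mul]
    refine integral_congr fun x _ => ?_
    simp only [hf, deriv_const_mul_sin_mul_sub, mul_assoc 2 c, cos_two_mul']
    ring
  have hI₂ : ∫ x in p..q, w x * deriv (deriv f) x ^ 2 = lam ^ 2 * c ^ 4 * S := by
    rw [← intervalIntegral.integral_const_mul]
    refine integral_congr fun x _ => ?_
    simp only [hf, deriv_const_mul_sin_mul_sub, deriv_const_mul_cos_mul_sub]
    ring
  rw [hI₀, hI₁, hI₂]
  ring

theorem equality_sufficiency_dirichlet_general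
    (a b : ℝ) (hab : a < b) (n : ℕ) (hn : 1 ≤ n) (lam : ℝ)
    (w : ℝ → ℝ)
    (hwlin : ∀ k : ℕ, 1 ≤ k → k ≤ n → ∃ α β : ℝ,
      ∀ x ∈ Set.Icc (a + ((k : ℝ) - 1) * (b - a) / n) (a + (k : ℝ) * (b - a) / n),
        w x = α * x + β)
    (f : ℝ → ℝ)
    (hf : ∀ x, f x = lam * Real.sin (n * Real.pi * (x - a) / (b - a))) :
    (∫ x in a..b, w x * deriv f x ^ 2) ^ 2 =
      (∫ x in a..b, w x * f x ^ 2) * (∫ x in a..b, w x * deriv (deriv f) x ^ 2) := by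
  have hba : 0 < b - a := sub_pos.mpr hab
  have hn0 : (n : ℝ) ≠ 0 := Nat.cast_ne_zero.mpr (by omega)
  set c := n * π / (b - a)
  set t : ℕ → ℝ := fun k => a + k * (b - a) / n
  have hf_eq : f = fun x => lam * sin (c * (x - a)) := by
    ext x
    rw [hf, mul_div_right_comm]
  have ht : Monotone t := fun _ _ hij => by
    simp only [t]
    gcongr
  have hw : IsPiecewiseAffine w t n := fun k hk => by
    simpa [t] using hwlin (k + 1) (Nat.le_add_left 1 k) hk
  have hnodes : ∀ k ≤ n, ∃ j : ℤ, 2 * c * (t k - a) = j * (2 * π) := fun k _ =>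
    ⟨k, by simp only [t, c]; field_simp; push_cast; ring⟩
  have ht0 : t 0 = a := by simp [t]
  have htn : t n = b := by simp only [t]; field_simp; ring
  have hK := hw.integral_mul_cos_eq_zero ht (by positivity) hnodes
  have hsin := hw.intervalIntegrable_mul ht (g := fun x => sin (c * (x - a)) ^ 2) (by fun_prop)
  have hcos := hw.intervalIntegrable_mul ht (g := fun x => cos (2 * c * (x - a))) (by fun_prop)
  rw [ht0, htn] at hK hsin hcos
  exact sq_integral_mul_deriv_sq_eq_of_integral_mul_cos_eq_zero hf_eq hsin hcos hK

/-- Equality case (sufficiency): if `f x = λ sin (nπ(x-a)/(b-a))` and the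
nonnegative concave weight `w` is affine on each subinterval
`J_k = [a + (k-1)(b-a)/n, a + k(b-a)/n]`, `k = 1, …, n`, then equality holds
in the Hardy–Littlewood inequality. -/
theorem equality_sufficiency_dirichlet
    (a b : ℝ) (hab : a < b) (n : ℕ) (hn : 1 ≤ n) (lam : ℝ)
    (w : ℝ → ℝ)
    (hw0 : ∀ x ∈ Set.Icc a b, 0 ≤ w x)
    (hwconc : ConcaveOn ℝ (Set.Icc a b) w)
    (hwlin : ∀ k : ℕ, 1 ≤ k → k ≤ n → ∃ α β : ℝ,
      ∀ x ∈ Set.Icc (a + ((k : ℝ) - 1) * (b - a) / n) (a + (k : ℝ) * (b - a) / n),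
        w x = α * x + β)
    (f : ℝ → ℝ)
    (hf : ∀ x, f x = lam * Real.sin (n * Real.pi * (x - a) / (b - a))) :
    (∫ x in a..b, w x * deriv f x ^ 2) ^ 2 =
      (∫ x in a..b, w x * f x ^ 2) * (∫ x in a..b, w x * deriv (deriv f) x ^ 2) :=
  equality_sufficiency_dirichlet_general a b hab n hn lam w hwlin f hf
end

section
/- Let a < b be real numbers, let w : [a,b] → [0,∞) be a concave and (monotonically) increasing function, and let f ∈ C²[a,b] satisfy f(a) = 0 and f'(b) = 0. Then (∫ₐᵇ w(x) f'(x)² dx)² ≤ (∫ₐᵇ w(x) f(x)² dx) · (∫ₐᵇ w(x) f''(x)² dx). -/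
/-!
With `h = f ^ 2` one has `h'' = 2 (f' ^ 2 + f f'')`, so the inequality follows from the weighted
Cauchy–Schwarz inequality `(∫ w f f'')² ≤ (∫ w f²) (∫ w f''²)` once `∫ w h'' ≤ 0`, i.e.
`0 ≤ ∫ w f'² ≤ -∫ w f f''`. For smooth `w`, two integrations by parts give
`∫ w h'' = -∫ w' h' = -w'(b) h(b) + ∫ w'' h ≤ 0`, using `h'(a) = h'(b) = 0`, `h ≥ h(a)`, `w' ≥ 0`
and `w'' ≤ 0`. For a general concave increasing `w`, replace `w` on each cell of a partition by
its secant, at a cost of `sup |h''|` times the mesh times `w b - w a`. Integrating the secants by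
parts, the boundary terms telescope to `0` and what remains is `-∑ sᵢ (h(xᵢ₊₁) - h(xᵢ))` with
nonincreasing nonnegative slopes `sᵢ`, which is `≤ 0` by Abel summation; let the mesh tend to `0`.
-/

open intervalIntegral MeasureTheory Set Finset Filter Topology

theorem MonotoneOn.intervalIntegrable_mul_continuousOn {a b : ℝ} (hab : a ≤ b)
    {w g : ℝ → ℝ}
    (hw : MonotoneOn w (Icc a b)) (hg : ContinuousOn g (Icc a b)) :
    IntervalIntegrable (fun x => w x * g x) volume a b := by
  rw [← uIcc_of_le hab] at hw hg
  exact hw.intervalIntegrable.mul_continuousOn hg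

theorem integral_eq_sub_of_hasDerivWithinAt_Icc {u v : ℝ} (huv : u ≤ v) {g g' : ℝ → ℝ}
    (hg : ∀ x ∈ Icc u v, HasDerivWithinAt g (g' x) (Icc u v) x)
    (hg' : ContinuousOn g' (Icc u v)) :
    ∫ x in u..v, g' x = g v - g u :=
  integral_eq_sub_of_hasDerivAt_of_le huv (fun x hx => (hg x hx).continuousWithinAt)
    (fun x hx => (hg x (Ioo_subset_Icc_self hx)).hasDerivAt (Icc_mem_nhds hx.1 hx.2))
    (hg'.intervalIntegrable_of_Icc huv)

section

variable {h h1 h2 : ℝ → ℝ}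

theorem integral_affine_mul_deriv2 {u v : ℝ} (huv : u ≤ v) (α β : ℝ)
    (hh : ∀ x ∈ Icc u v, HasDerivWithinAt h (h1 x) (Icc u v) x)
    (hh1 : ∀ x ∈ Icc u v, HasDerivWithinAt h1 (h2 x) (Icc u v) x)
    (hh2 : ContinuousOn h2 (Icc u v)) :
    ∫ x in u..v, (α + β * x) * h2 x =
      (α + β * v) * h1 v - (α + β * u) * h1 u - β * (h v - h u) := by
  refine integral_eq_sub_of_hasDerivWithinAt_Icc huv
    (g := fun x => (α + β * x) * h1 x - β * h x) (fun x hx => ?_) (by fun_prop) |>.trans (by ring)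
  have hβx : HasDerivWithinAt (fun x => α + β * x) β (Icc u v) x := by
    simpa using ((hasDerivWithinAt_id x _).const_mul β).const_add α
  exact ((hβx.mul (hh1 x hx)).sub ((hh x hx).const_mul β)).congr_deriv (by ring)

theorem MonotoneOn.integral_mul_deriv2_le_secant {w : ℝ → ℝ} {u v M : ℝ} (huv : u < v)
    (hw : MonotoneOn w (Icc u v))
    (hh : ∀ x ∈ Icc u v, HasDerivWithinAt h (h1 x) (Icc u v) x)
    (hh1 : ∀ x ∈ Icc u v, HasDerivWithinAt h1 (h2 x) (Icc u v) x)
    (hh2 : ContinuousOn h2 (Icc u v)) (hM : ∀ x ∈ Icc u v, |h2 x| ≤ M) :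
    ∫ x in u..v, w x * h2 x ≤ w v * h1 v - w u * h1 u
      - (w v - w u) / (v - u) * (h v - h u) + M * (w v - w u) * (v - u) := by
  set s := (w v - w u) / (v - u)
  set α := w u - s * u
  have hαu : α + s * u = w u := by ring
  have hαv : α + s * v = w v := by
    simp only [α, s]; field_simp [sub_ne_zero.2 huv.ne']; ring
  have hs : 0 ≤ s := div_nonneg (sub_nonneg.2 (hw (left_mem_Icc.2 huv.le)
    (right_mem_Icc.2 huv.le) huv.le)) (sub_nonneg.2 huv.le)
  -- `w` and its secant both take values in `[w u, w v]`
  have hgap : ∀ x ∈ Icc u v, |w x - (α + s * x)| ≤ w v - w u := by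
    intro x hx
    have hwu := hw (left_mem_Icc.2 huv.le) hx hx.1
    have hwv := hw hx (right_mem_Icc.2 huv.le) hx.2
    have hsu := mul_le_mul_of_nonneg_left hx.1 hs
    have hsv := mul_le_mul_of_nonneg_left hx.2 hs
    rw [abs_sub_le_iff]
    constructor <;> linarith
  have hint_w := hw.intervalIntegrable_mul_continuousOn huv.le hh2
  have hint_sec : IntervalIntegrable (fun x => (α + s * x) * h2 x) volume u v :=
    ContinuousOn.intervalIntegrable_of_Icc huv.le (by fun_prop)
  have herr : ∫ x in u..v, (w x * h2 x - (α + s * x) * h2 x) ≤ M * (w v - w u) * (v - u) := by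
    calc ∫ x in u..v, (w x * h2 x - (α + s * x) * h2 x) ≤ ∫ _ in u..v, (w v - w u) * M := by
          refine integral_mono_on huv.le (hint_w.sub hint_sec) intervalIntegrable_const
            fun x hx => ?_
          calc w x * h2 x - (α + s * x) * h2 x ≤ |w x - (α + s * x)| * |h2 x| := by
                rw [← sub_mul, ← abs_mul]; exact le_abs_self _
            _ ≤ (w v - w u) * M :=
                mul_le_mul (hgap x hx) (hM x hx) (abs_nonneg _) ((abs_nonneg _).trans (hgap x hx))
      _ = M * (w v - w u) * (v - u) := by simp; ring
  rw [integral_sub hint_w hint_sec, integral_affine_mul_deriv2 huv.le α s hh hh1 hh2, hαu,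
    hαv] at herr
  linarith

theorem Finset.sum_range_mul_sub_nonneg_of_antitone {s H : ℕ → ℝ} {n : ℕ}
    (hs : ∀ i, i + 1 < n → s (i + 1) ≤ s i) (hs0 : ∀ i < n, 0 ≤ s i)
    (hH : ∀ i ≤ n, H 0 ≤ H i) :
    0 ≤ ∑ i ∈ range n, s i * (H (i + 1) - H i) := by
  rcases n with _ | n
  · simp
  have hpartial : ∀ k, ∑ i ∈ range k, (H (i + 1) - H i) = H k - H 0 := sum_range_sub H
  have := sum_range_by_parts s (fun i => H (i + 1) - H i) (n + 1)
  simp only [smul_eq_mul, hpartial, add_tsub_cancel_right] at this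
  rw [this, sub_nonneg]
  have hlast := mul_nonneg (hs0 n (by omega)) (sub_nonneg.2 (hH (n + 1) le_rfl))
  refine le_trans (sum_nonpos fun i hi => ?_) hlast
  have hi := mem_range.1 hi
  exact mul_nonpos_of_nonpos_of_nonneg (sub_nonpos.2 (hs i (by omega)))
    (sub_nonneg.2 (hH (i + 1) (by omega)))

theorem ConcaveOn.integral_mul_deriv2_le_of_partition {w : ℝ → ℝ} {a b δ M : ℝ} {n : ℕ}
    {x : ℕ → ℝ} (hx : StrictMono x) (hx0 : x 0 = a) (hxn : x n = b)
    (hδ : ∀ i < n, x (i + 1) - x i ≤ δ)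
    (hwc : ConcaveOn ℝ (Icc a b) w) (hwm : MonotoneOn w (Icc a b))
    (hh : ∀ y ∈ Icc a b, HasDerivWithinAt h (h1 y) (Icc a b) y)
    (hh1 : ∀ y ∈ Icc a b, HasDerivWithinAt h1 (h2 y) (Icc a b) y)
    (hh2 : ContinuousOn h2 (Icc a b)) (hM : ∀ y ∈ Icc a b, |h2 y| ≤ M)
    (hmin : IsMinOn h (Icc a b) a) (h1a : h1 a = 0) (h1b : h1 b = 0) :
    ∫ y in a..b, w y * h2 y ≤ M * δ * (w b - w a) := by
  have hmem : ∀ i ≤ n, x i ∈ Icc a b := fun i hi =>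
    ⟨hx0 ▸ hx.monotone (Nat.zero_le i), hxn ▸ hx.monotone hi⟩
  have hM0 : 0 ≤ M := (abs_nonneg _).trans (hM a (hx0 ▸ hmem 0 (Nat.zero_le n)))
  have hsub : ∀ i < n, Icc (x i) (x (i + 1)) ⊆ Icc a b := fun i hi =>
    Icc_subset_Icc (hmem i hi.le).1 (hmem (i + 1) hi).2
  have hwx : ∀ i < n, w (x i) ≤ w (x (i + 1)) := fun i hi =>
    hwm (hmem i hi.le) (hmem (i + 1) hi) (hx.monotone (Nat.le_succ i))
  set s := fun i => (w (x (i + 1)) - w (x i)) / (x (i + 1) - x i)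
  have hpiece : ∀ i < n, ∫ y in x i..x (i + 1), w y * h2 y ≤
      (w (x (i + 1)) * h1 (x (i + 1)) - w (x i) * h1 (x i))
        - s i * (h (x (i + 1)) - h (x i)) + M * δ * (w (x (i + 1)) - w (x i)) := by
    intro i hi
    have hsub := hsub i hi
    refine ((hwm.mono hsub).integral_mul_deriv2_le_secant (hx (Nat.lt_succ_self i))
      (fun y hy => (hh y (hsub hy)).mono hsub) (fun y hy => (hh1 y (hsub hy)).mono hsub)
      (hh2.mono hsub) (fun y hy => hM y (hsub hy))).trans ?_
    have := mul_le_mul_of_nonneg_left (hδ i hi) (mul_nonneg hM0 (sub_nonneg.2 (hwx i hi)))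
    linarith
  have hslopes : 0 ≤ ∑ i ∈ range n, s i * (h (x (i + 1)) - h (x i)) := by
    refine sum_range_mul_sub_nonneg_of_antitone (H := fun i => h (x i)) (fun i hi => ?_)
      (fun i hi => ?_) (fun i hi => hx0 ▸ hmin (hmem i hi))
    · exact hwc.slope_anti_adjacent (hmem i (by omega)) (hmem (i + 2) hi) (hx (by omega))
        (hx (by omega))
    · exact div_nonneg (sub_nonneg.2 (hwx i hi)) (sub_nonneg.2 (hx.monotone (Nat.le_succ i)))
  calc ∫ y in a..b, w y * h2 y = ∑ i ∈ range n, ∫ y in x i..x (i + 1), w y * h2 y := by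
        rw [sum_integral_adjacent_intervals fun i hi =>
          (hwm.mono (hsub i hi)).intervalIntegrable_mul_continuousOn
            (hx.monotone (Nat.le_succ i)) (hh2.mono (hsub i hi)), hx0, hxn]
    _ ≤ ∑ i ∈ range n, ((w (x (i + 1)) * h1 (x (i + 1)) - w (x i) * h1 (x i))
        - s i * (h (x (i + 1)) - h (x i)) + M * δ * (w (x (i + 1)) - w (x i))) :=
        sum_le_sum fun i hi => hpiece i (mem_range.1 hi)
    _ = (w b * h1 b - w a * h1 a) - ∑ i ∈ range n, s i * (h (x (i + 1)) - h (x i))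
        + M * δ * (w b - w a) := by
        rw [sum_add_distrib, sum_sub_distrib, ← mul_sum,
          sum_range_sub (fun i => w (x i) * h1 (x i)), sum_range_sub (fun i => w (x i)), hx0, hxn]
    _ ≤ M * δ * (w b - w a) := by rw [h1a, h1b]; linarith

theorem ConcaveOn.integral_mul_deriv2_nonpos_s3 {w : ℝ → ℝ} {a b : ℝ} (hab : a < b)
    (hwc : ConcaveOn ℝ (Icc a b) w) (hwm : MonotoneOn w (Icc a b))
    (hh : ∀ y ∈ Icc a b, HasDerivWithinAt h (h1 y) (Icc a b) y)
    (hh1 : ∀ y ∈ Icc a b, HasDerivWithinAt h1 (h2 y) (Icc a b) y)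
    (hh2 : ContinuousOn h2 (Icc a b))
    (hmin : IsMinOn h (Icc a b) a) (h1a : h1 a = 0) (h1b : h1 b = 0) :
    ∫ y in a..b, w y * h2 y ≤ 0 := by
  obtain ⟨M, hM⟩ := isCompact_Icc.exists_bound_of_continuousOn hh2
  have hbound : ∀ n : ℕ, 1 ≤ n →
      ∫ y in a..b, w y * h2 y ≤ M * ((b - a) / n) * (w b - w a) := by
    intro n hn
    have hn0 : (0 : ℝ) < n := by exact_mod_cast hn
    refine hwc.integral_mul_deriv2_le_of_partition (x := fun i => a + i * ((b - a) / n))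
      (fun i j hij => ?_) (by simp) (by field_simp; ring) (fun i _ => by push_cast; ring_nf; rfl)
      hwm hh hh1 hh2 (fun y hy => by simpa using hM y hy) hmin h1a h1b
    have : (i : ℝ) < j := by exact_mod_cast hij
    have := mul_lt_mul_of_pos_right this (div_pos (sub_pos.2 hab) hn0)
    simpa using this
  have hlim : Tendsto (fun n : ℕ => M * ((b - a) / n) * (w b - w a)) atTop (𝓝 0) := by
    simpa using ((tendsto_const_div_atTop_nhds_zero_nat (b - a)).const_mul M).mul_const (w b - w a)
  exact ge_of_tendsto hlim (eventually_atTop.2 ⟨1, hbound⟩)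

end

theorem sq_integral_mul_le_integral_mul_sq_s3 {w f g : ℝ → ℝ} {a b : ℝ} (hab : a ≤ b)
    (hw : ∀ x ∈ Icc a b, 0 ≤ w x)
    (hf : IntervalIntegrable (fun x => w x * f x ^ 2) volume a b)
    (hfg : IntervalIntegrable (fun x => w x * (f x * g x)) volume a b)
    (hg : IntervalIntegrable (fun x => w x * g x ^ 2) volume a b) :
    (∫ x in a..b, w x * (f x * g x)) ^ 2 ≤
      (∫ x in a..b, w x * f x ^ 2) * ∫ x in a..b, w x * g x ^ 2 := by
  have hquad : ∀ t : ℝ, 0 ≤ (∫ x in a..b, w x * f x ^ 2) * (t * t)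
      + 2 * (∫ x in a..b, w x * (f x * g x)) * t + ∫ x in a..b, w x * g x ^ 2 := by
    intro t
    have hexpand : ∫ x in a..b, w x * (t * f x + g x) ^ 2 = ∫ x in a..b,
        (t * t * (w x * f x ^ 2) + 2 * t * (w x * (f x * g x)) + w x * g x ^ 2) :=
      integral_congr fun x _ => by ring
    rw [integral_add ((hf.const_mul _).add (hfg.const_mul _)) hg,
      integral_add (hf.const_mul _) (hfg.const_mul _), intervalIntegral.integral_const_mul,
      intervalIntegral.integral_const_mul] at hexpand
    have : 0 ≤ ∫ x in a..b, w x * (t * f x + g x) ^ 2 :=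
      integral_nonneg hab fun x hx => mul_nonneg (hw x hx) (sq_nonneg _)
    linarith
  have := discrim_le_zero hquad
  rw [discrim] at this
  nlinarith

/-- Corollary: the Hardy–Littlewood inequality for a concave and increasing
weight `w : [a,b] → [0,∞)` and `f ∈ C²[a,b]` with `f a = 0`, `f' b = 0`. -/
theorem hardy_littlewood_concave_increasing_weight
    (a b : ℝ) (hab : a < b) (w f f' f'' : ℝ → ℝ)
    (hw0 : ∀ x ∈ Set.Icc a b, 0 ≤ w x)
    (hwconc : ConcaveOn ℝ (Set.Icc a b) w)
    (hwmono : MonotoneOn w (Set.Icc a b))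
    (hf' : ∀ x ∈ Set.Icc a b, HasDerivWithinAt f (f' x) (Set.Icc a b) x)
    (hf'' : ∀ x ∈ Set.Icc a b, HasDerivWithinAt f' (f'' x) (Set.Icc a b) x)
    (hf''cont : ContinuousOn f'' (Set.Icc a b))
    (hfa : f a = 0) (hf'b : f' b = 0) :
    (∫ x in a..b, w x * f' x ^ 2) ^ 2 ≤
      (∫ x in a..b, w x * f x ^ 2) * (∫ x in a..b, w x * f'' x ^ 2) := by
  have hf : ContinuousOn f (Icc a b) := fun x hx => (hf' x hx).continuousWithinAt
  have hf'cont : ContinuousOn f' (Icc a b) := fun x hx => (hf'' x hx).continuousWithinAt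
  have hint : ∀ g : ℝ → ℝ, ContinuousOn g (Icc a b) →
      IntervalIntegrable (fun x => w x * g x) volume a b := fun g hg =>
    hwmono.intervalIntegrable_mul_continuousOn hab.le hg
  have hkey : ∫ x in a..b, w x * (2 * (f' x ^ 2 + f x * f'' x)) ≤ 0 :=
    hwconc.integral_mul_deriv2_nonpos_s3 hab hwmono (h := fun x => f x ^ 2)
      (h1 := fun x => 2 * (f x * f' x))
      (fun x hx => ((hf' x hx).pow 2).congr_deriv (by ring))
      (fun x hx => (((hf' x hx).mul (hf'' x hx)).const_mul 2).congr_deriv (by ring))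
      (by fun_prop) (fun x _ => by simp [hfa, sq_nonneg]) (by simp [hfa]) (by simp [hf'b])
  rw [integral_congr fun x _ => show w x * (2 * (f' x ^ 2 + f x * f'' x)) =
      2 * (w x * f' x ^ 2) + 2 * (w x * (f x * f'' x)) by ring,
    integral_add ((hint (fun x => f' x ^ 2) (hf'cont.pow 2)).const_mul 2)
      ((hint (fun x => f x * f'' x) (hf.mul hf''cont)).const_mul 2),
    intervalIntegral.integral_const_mul, intervalIntegral.integral_const_mul] at hkey
  have hpos : 0 ≤ ∫ x in a..b, w x * f' x ^ 2 :=
    integral_nonneg hab.le fun x hx => mul_nonneg (hw0 x hx) (sq_nonneg _)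
  have hCS := sq_integral_mul_le_integral_mul_sq_s3 hab.le hw0 (hint (fun x => f x ^ 2) (hf.pow 2))
    (hint (fun x => f x * f'' x) (hf.mul hf''cont)) (hint (fun x => f'' x ^ 2) (hf''cont.pow 2))
  nlinarith
end

section
/- Let a < b be real numbers, let w : [a,b] → ℝ be a concave function (extended continuously to the endpoints), and let f ∈ C¹[a,b] satisfy f(a) = f(b) = 0. Then ∫ₐᵇ w(t) f'(t) dt = − ∫ₐᵇ w'₋(t) f(t) dt, where w'₋ denotes the left derivative of w. -/
/-!
Integrate `(w f)' = w'₋ f + w f'` over `[a, b]` with the fundamental theorem of calculus for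
left derivatives. The only difficulty is the integrability of `w'₋ f`, since `w'₋` may blow up at
the endpoints. Concavity squeezes `w'₋ t` between the secant slopes `(w b - w t) / (b - t)` and
`(w t - w a) / (t - a)`, while `f` is Lipschitz and vanishes at `a` and `b`, so `|f t|` is at most
a multiple of both `t - a` and `b - t`; hence `w'₋ f` is bounded by `2 L sup |w|`. Being
antitone, `w'₋` is measurable.
-/

open Set MeasureTheory

namespace intervalIntegral

theorem integral_eq_sub_of_hasDeriv_left_of_le {a b : ℝ} {g g' : ℝ → ℝ} (hab : a ≤ b)
    (hcont : ContinuousOn g (Icc a b))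
    (hderiv : ∀ x ∈ Ioo a b, HasDerivWithinAt g (g' x) (Iio x) x)
    (hint : IntervalIntegrable g' volume a b) :
    ∫ y in a..b, g' y = g b - g a := by
  have hcont' : ContinuousOn (fun t => g (-t)) (Icc (-b) (-a)) :=
    hcont.comp continuous_neg.continuousOn fun t ht => ⟨by linarith [ht.2], by linarith [ht.1]⟩
  have hderiv' :
      ∀ x ∈ Ioo (-b) (-a), HasDerivWithinAt (fun t => g (-t)) (-g' (-x)) (Ioi x) x := by
    intro x hx
    have hx' : -x ∈ Ioo a b := ⟨by linarith [hx.2], by linarith [hx.1]⟩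
    have h := (hderiv (-x) hx').comp x ((hasDerivAt_neg x).hasDerivWithinAt (s := Ioi x))
      fun t (ht : x < t) => neg_lt_neg ht
    rwa [mul_neg_one] at h
  have hint' : IntervalIntegrable (fun t => -g' (-t)) volume (-b) (-a) :=
    ((IntervalIntegrable.iff_comp_neg).mp hint).neg.symm
  have hftc := integral_eq_sub_of_hasDeriv_right_of_le (neg_le_neg hab) hcont' hderiv' hint'
  rw [integral_neg, ← integral_comp_neg] at hftc
  simp only [neg_neg] at hftc
  linarith

end intervalIntegral

namespace ConcaveOn

variable {S : Set ℝ} {f : ℝ → ℝ} {f' x y z : ℝ}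

lemma slope_le_of_hasDerivWithinAt_Iio (hfc : ConcaveOn ℝ S f) (hz : z ∈ S) (hy : y ∈ S)
    (hzx : z < x) (hxy : x < y) (hf' : HasDerivWithinAt f f' (Iio x) x) :
    slope f x y ≤ f' := by
  apply ge_of_tendsto <| (hasDerivWithinAt_iff_tendsto_slope' self_notMem_Iio).mp hf'
  filter_upwards [Ioo_mem_nhdsLT hzx] with s hs
  have hsS : s ∈ S := hfc.1.ordConnected.out hz hy ⟨hs.1.le, (hs.2.trans hxy).le⟩
  rw [slope_comm f x s, slope_def_field, slope_def_field]
  exact hfc.slope_anti_adjacent hsS hy hs.2 hxy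

variable {a b : ℝ} {w w' : ℝ → ℝ}

lemma antitoneOn_of_hasDerivWithinAt_Iio (hw : ConcaveOn ℝ (Icc a b) w)
    (hw' : ∀ t ∈ Ioo a b, HasDerivWithinAt w (w' t) (Iio t) t) :
    AntitoneOn w' (Ioo a b) := by
  intro s hs t ht hst
  obtain rfl | hlt := hst.eq_or_lt
  · rfl
  have ha : a ∈ Icc a b := left_mem_Icc.2 (hs.1.trans hs.2).le
  calc w' t ≤ slope w s t :=
        hw.le_slope_of_hasDerivWithinAt_Iio (Ioo_subset_Icc_self hs) (Ioo_subset_Icc_self ht) hlt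
          (hw' t ht)
    _ ≤ w' s :=
        hw.slope_le_of_hasDerivWithinAt_Iio ha (Ioo_subset_Icc_self ht) hs.1 hlt (hw' s hs)

lemma abs_mul_le_of_hasDerivWithinAt_Iio {M L c d t : ℝ} (hw : ConcaveOn ℝ (Icc a b) w)
    (hM : ∀ x ∈ Icc a b, |w x| ≤ M) (ht : t ∈ Ioo a b) (hd : HasDerivWithinAt w d (Iio t) t)
    (hca : |c| ≤ L * (t - a)) (hcb : |c| ≤ L * (b - t)) :
    |d * c| ≤ 2 * M * L := by
  have hat : 0 < t - a := sub_pos.2 ht.1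
  have htb : 0 < b - t := sub_pos.2 ht.2
  have hL : 0 ≤ L := nonneg_of_mul_nonneg_left ((abs_nonneg c).trans hca) hat
  have hta : t ∈ Icc a b := Ioo_subset_Icc_self ht
  have ha : a ∈ Icc a b := left_mem_Icc.2 (ht.1.trans ht.2).le
  have hb : b ∈ Icc a b := right_mem_Icc.2 (ht.1.trans ht.2).le
  have hMt := abs_le.1 (hM t hta)
  rw [abs_mul]
  rcases le_total 0 d with hd₀ | hd₀
  · have hd_le : d ≤ slope w a t := hw.le_slope_of_hasDerivWithinAt_Iio ha hta ht.1 hd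
    calc |d| * |c| ≤ slope w a t * (L * (t - a)) := by
          rw [abs_of_nonneg hd₀]; exact mul_le_mul hd_le hca (abs_nonneg c) (hd₀.trans hd_le)
      _ = (w t - w a) * L := by rw [slope_def_field]; field_simp
      _ ≤ 2 * M * L := by have := abs_le.1 (hM a ha); gcongr; linarith
  · have hle_d : slope w t b ≤ d := hw.slope_le_of_hasDerivWithinAt_Iio ha hb ht.1 ht.2 hd
    calc |d| * |c| ≤ -slope w t b * (L * (b - t)) := by
          rw [abs_of_nonpos hd₀]
          exact mul_le_mul (neg_le_neg hle_d) hcb (abs_nonneg c) (by linarith)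
      _ = (w t - w b) * L := by rw [slope_def_field]; field_simp; ring
      _ ≤ 2 * M * L := by have := abs_le.1 (hM b hb); gcongr; linarith

lemma intervalIntegrable_mul_of_lipschitzOnWith (hab : a ≤ b) (hw : ConcaveOn ℝ (Icc a b) w)
    (hwcont : ContinuousOn w (Icc a b))
    (hw' : ∀ t ∈ Ioo a b, HasDerivWithinAt w (w' t) (Iio t) t) {K : NNReal}
    (hf : LipschitzOnWith K f (Icc a b)) (hfa : f a = 0) (hfb : f b = 0) :
    IntervalIntegrable (fun t => w' t * f t) volume a b := by
  obtain ⟨M, hM⟩ := isCompact_Icc.exists_bound_of_continuousOn hwcont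
  have hfdist : ∀ t ∈ Icc a b, ∀ s ∈ Icc a b, |f t - f s| ≤ K * |t - s| := fun t ht s hs => by
    simpa only [Real.dist_eq] using hf.dist_le_mul t ht s hs
  rw [intervalIntegrable_iff_integrableOn_Ioo_of_le hab]
  refine IntegrableOn.of_bound measure_Ioo_lt_top ?_ (2 * M * K) ?_
  · have hw'_meas := aemeasurable_restrict_of_antitoneOn (μ := volume) measurableSet_Ioo
      (hw.antitoneOn_of_hasDerivWithinAt_Iio hw')
    have hf_meas : AEMeasurable f (volume.restrict (Ioo a b)) :=
      (hf.continuousOn.mono Ioo_subset_Icc_self).aemeasurable measurableSet_Ioo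
    exact (hw'_meas.mul hf_meas).aestronglyMeasurable
  filter_upwards [ae_restrict_mem measurableSet_Ioo] with t ht
  have hta := hfdist t (Ioo_subset_Icc_self ht) a (left_mem_Icc.2 hab)
  have htb := hfdist t (Ioo_subset_Icc_self ht) b (right_mem_Icc.2 hab)
  rw [hfa, sub_zero, abs_of_pos (sub_pos.2 ht.1)] at hta
  rw [hfb, sub_zero, abs_sub_comm, abs_of_pos (sub_pos.2 ht.2)] at htb
  exact hw.abs_mul_le_of_hasDerivWithinAt_Iio (fun x hx => Real.norm_eq_abs (w x) ▸ hM x hx) ht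
    (hw' t ht) hta htb

end ConcaveOn

/-- Lemma 4 (integration by parts for a concave weight): if `w` is concave on
`[a,b]` (continuous up to the endpoints), `w'` is its left derivative on
`(a,b)`, and `f ∈ C¹[a,b]` with `f a = f b = 0`, then
`∫ₐᵇ w f' = − ∫ₐᵇ w'₋ f`. -/
theorem parts_concave_weight
    (a b : ℝ) (hab : a < b) (w w' : ℝ → ℝ)
    (hwconc : ConcaveOn ℝ (Set.Icc a b) w)
    (hwcont : ContinuousOn w (Set.Icc a b))
    (hw' : ∀ t ∈ Set.Ioo a b, HasDerivWithinAt w (w' t) (Set.Iio t) t)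
    (f f' : ℝ → ℝ)
    (hf : ∀ x ∈ Set.Icc a b, HasDerivWithinAt f (f' x) (Set.Icc a b) x)
    (hf'cont : ContinuousOn f' (Set.Icc a b))
    (hfa : f a = 0) (hfb : f b = 0) :
    ∫ t in a..b, w t * f' t = - ∫ t in a..b, w' t * f t := by
  obtain ⟨K, hK⟩ := (isCompact_Icc.image_of_continuousOn hf'cont.nnnorm).bddAbove
  have hf_lip : LipschitzOnWith K f (Icc a b) :=
    (convex_Icc a b).lipschitzOnWith_of_nnnorm_hasDerivWithin_le hf
      fun x hx => hK (mem_image_of_mem _ hx)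
  have hint₁ : IntervalIntegrable (fun t => w' t * f t) volume a b :=
    hwconc.intervalIntegrable_mul_of_lipschitzOnWith hab.le hwcont hw' hf_lip hfa hfb
  have hint₂ : IntervalIntegrable (fun t => w t * f' t) volume a b :=
    (hwcont.mul hf'cont).intervalIntegrable_of_Icc hab.le
  have hderiv : ∀ t ∈ Ioo a b,
      HasDerivWithinAt (fun t => w t * f t) (w' t * f t + w t * f' t) (Iio t) t := fun t ht =>
    (hw' t ht).mul ((hf t (Ioo_subset_Icc_self ht)).hasDerivAt
      (Icc_mem_nhds ht.1 ht.2)).hasDerivWithinAt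
  have hftc := intervalIntegral.integral_eq_sub_of_hasDeriv_left_of_le
    (g := fun t => w t * f t) hab.le (hwcont.mul hf_lip.continuousOn) hderiv (hint₁.add hint₂)
  rw [intervalIntegral.integral_add hint₁ hint₂, hfa, hfb, mul_zero, mul_zero, sub_zero] at hftc
  linarith
end

section
/- Let a < b be real numbers and let w : [a,b] → [0,∞) be a concave function (extended continuously to the endpoints). Then there exists a sequence (wₙ)ₙ of functions wₙ : [a,b] → [0,∞) such that each wₙ is concave, nonnegative, and twice continuously differentiable on [a,b], and wₙ converges to w uniformly on [a,b]. -/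
/-!
Contract `w` towards the midpoint of `[a, b]` by the homothety of ratio
`θ = (b - a) / (b - a + 2r) < 1`: the result is concave and nonnegative on the larger interval
`[a - r, b + r]`, which the homothety maps onto `[a, b]`. Convolving it with a nonnegative
smooth bump supported in `(-r, r)` averages translates of a concave function, so it stays
concave (and nonnegative) on `[a, b]`, becomes smooth, and differs from `w` at `x` by at most
the oscillation of `w` at scale `2r`, since the homothety moves points of `[a, b]` by less
than `r`. Uniform continuity of `w` then lets `r → 0`.
-/

open MeasureTheory Set Metric ContinuousLinearMap
open scoped Convolution ContDiff

namespace ContDiffBump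

variable {E : Type*} [NormedAddCommGroup E] [NormedSpace ℝ E] [FiniteDimensional ℝ E]
  [MeasurableSpace E] [BorelSpace E] {μ : Measure E} [μ.IsAddHaarMeasure]
  (φ : ContDiffBump (0 : E)) {u : E → ℝ}

theorem concaveOn_normed_convolution {s : Set E} (hs : Convex ℝ s) (hu : Continuous u)
    (hconc : ConcaveOn ℝ (thickening φ.rOut s) u) :
    ConcaveOn ℝ s (φ.normed μ ⋆[lsmul ℝ ℝ, μ] u) := by
  have hint (x : E) : Integrable (fun t => φ.normed μ t * u (x - t)) μ :=
    φ.hasCompactSupport_normed.convolutionExists_left_of_continuous_right (lsmul ℝ ℝ)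
      φ.continuous_normed.locallyIntegrable hu x
  have hmem {x : E} (hx : x ∈ s) {t : E} (ht : φ.normed μ t ≠ 0) :
      x - t ∈ thickening φ.rOut s := by
    refine mem_thickening_iff.2 ⟨x, hx, ?_⟩
    have ht_ball := φ.support_normed_eq (μ := μ) ▸ Function.mem_support.2 ht
    simpa [dist_eq_norm] using ht_ball
  refine ⟨hs, fun x hx y hy p q hp hq hpq => ?_⟩
  simp only [convolution_def, lsmul_apply, smul_eq_mul]
  rw [← integral_const_mul, ← integral_const_mul,
    ← integral_add ((hint x).const_mul p) ((hint y).const_mul q)]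
  refine integral_mono (((hint x).const_mul p).add ((hint y).const_mul q)) (hint _) fun t => ?_
  by_cases ht : φ.normed μ t = 0
  · simp [ht]
  have hcomb : p • (x - t) + q • (y - t) = p • x + q • y - t := by
    obtain rfl : q = 1 - p := by linarith
    module
  have hu_comb := hconc.2 (hmem hx ht) (hmem hy ht) hp hq hpq
  rw [hcomb, smul_eq_mul, smul_eq_mul] at hu_comb
  calc p * (φ.normed μ t * u (x - t)) + q * (φ.normed μ t * u (y - t))
      = φ.normed μ t * (p * u (x - t) + q * u (y - t)) := by ring
    _ ≤ φ.normed μ t * u (p • x + q • y - t) :=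
      mul_le_mul_of_nonneg_left hu_comb (φ.nonneg_normed t)

end ContDiffBump

section Homothety

variable {a b r : ℝ}

theorem mapsTo_homothety_Icc (hab : a ≤ b) (hr : 0 < r) :
    MapsTo (AffineMap.homothety ((a + b) / 2) ((b - a) / (b - a + 2 * r)))
      (Icc (a - r) (b + r)) (Icc a b) := by
  intro z ⟨hz₁, hz₂⟩
  have hD : 0 < b - a + 2 * r := by linarith
  have hθ : (b - a) / (b - a + 2 * r) * (b - a + 2 * r) = b - a := div_mul_cancel₀ _ hD.ne'
  have hθ₀ : 0 ≤ (b - a) / (b - a + 2 * r) := div_nonneg (by linarith) hD.le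
  simp only [AffineMap.homothety_apply, vsub_eq_sub, vadd_eq_add, smul_eq_mul, mem_Icc]
  constructor <;> nlinarith [mul_nonneg hθ₀ (by linarith : 0 ≤ z - a + r),
    mul_nonneg hθ₀ (by linarith : 0 ≤ b + r - z)]

theorem dist_homothety_lt (hab : a ≤ b) (hr : 0 < r) {x y : ℝ} (hx : x ∈ Icc a b)
    (hy : dist y x < r) :
    dist (AffineMap.homothety ((a + b) / 2) ((b - a) / (b - a + 2 * r)) y) x < 2 * r := by
  set θ := (b - a) / (b - a + 2 * r)
  have hD : 0 < b - a + 2 * r := by linarith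
  have hθ : θ * (b - a + 2 * r) = b - a := div_mul_cancel₀ _ hD.ne'
  have hθ₀ : 0 ≤ θ := div_nonneg (by linarith) hD.le
  have hθ₁ : θ < 1 := (div_lt_one hD).2 (by linarith)
  clear_value θ
  have hxm : |(a + b) / 2 - x| ≤ (b - a) / 2 :=
    abs_le.2 ⟨by linarith [hx.2], by linarith [hx.1]⟩
  rw [Real.dist_eq] at hy ⊢
  simp only [AffineMap.homothety_apply, vsub_eq_sub, vadd_eq_add, smul_eq_mul]
  calc |θ * (y - (a + b) / 2) + (a + b) / 2 - x|
      = |θ * (y - x) + (1 - θ) * ((a + b) / 2 - x)| := by congr 1; ring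
    _ ≤ θ * |y - x| + (1 - θ) * |(a + b) / 2 - x| := by
      refine (abs_add_le _ _).trans_eq ?_
      rw [abs_mul, abs_mul, abs_of_nonneg hθ₀, abs_of_pos (sub_pos.2 hθ₁)]
    _ ≤ θ * r + (1 - θ) * ((b - a) / 2) := by gcongr
    _ = 2 * θ * r := by linear_combination -hθ / 2
    _ < 2 * r := by nlinarith

theorem thickening_Icc_subset : thickening r (Icc a b) ⊆ Icc (a - r) (b + r) := by
  intro z hz
  obtain ⟨x, ⟨hx₁, hx₂⟩, hzx⟩ := mem_thickening_iff.1 hz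
  rw [Real.dist_eq, abs_lt] at hzx
  constructor <;> linarith

end Homothety

theorem exists_concaveOn_contDiff_dist_le {a b : ℝ} (hab : a ≤ b) {w : ℝ → ℝ}
    (hw0 : ∀ x ∈ Icc a b, 0 ≤ w x) (hwconc : ConcaveOn ℝ (Icc a b) w)
    (hwcont : ContinuousOn w (Icc a b)) {r : ℝ} (hr : 0 < r) :
    ∃ W : ℝ → ℝ, ConcaveOn ℝ (Icc a b) W ∧ (∀ x ∈ Icc a b, 0 ≤ W x) ∧ ContDiff ℝ ∞ W ∧
      ∀ ε, (∀ p ∈ Icc a b, ∀ q ∈ Icc a b, dist p q < 2 * r → dist (w p) (w q) ≤ ε) →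
        ∀ x ∈ Icc a b, dist (W x) (w x) ≤ ε := by
  set h := AffineMap.homothety ((a + b) / 2) ((b - a) / (b - a + 2 * r))
  set u : ℝ → ℝ := IccExtend hab ((Icc a b).domRestrict w) ∘ h
  have hmaps : MapsTo h (Icc (a - r) (b + r)) (Icc a b) := mapsTo_homothety_Icc hab hr
  have huw : EqOn (w ∘ h) u (Icc (a - r) (b + r)) := fun z hz =>
    (IccExtend_of_mem hab ((Icc a b).domRestrict w) (hmaps hz)).symm
  have hu : Continuous u :=
    hwcont.domRestrict.Icc_extend'.comp (AffineMap.homothety_continuous _ _)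
  have hu0 (z : ℝ) : 0 ≤ u z := hw0 _ (Subtype.prop _)
  have huconc : ConcaveOn ℝ (thickening r (Icc a b)) u :=
    ((hwconc.comp_affineMap h).subset hmaps (convex_Icc _ _)).congr huw |>.subset
      (thickening_Icc_subset) ((convex_Icc a b).thickening r)
  let φ : ContDiffBump (0 : ℝ) := ⟨r / 2, r, half_pos hr, half_lt_self hr⟩
  refine ⟨φ.normed volume ⋆[lsmul ℝ ℝ, volume] u,
    φ.concaveOn_normed_convolution (convex_Icc a b) hu huconc,
    fun x _ => integral_nonneg fun t => mul_nonneg (φ.nonneg_normed t) (hu0 _),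
    φ.hasCompactSupport_normed.contDiff_convolution_left _ φ.contDiff_normed hu.locallyIntegrable,
    fun ε hε x hx => ?_⟩
  have hε0 : 0 ≤ ε :=
    dist_nonneg.trans (hε x hx x hx (by rw [dist_self]; positivity))
  refine dist_convolution_le hε0 φ.support_normed_eq.subset φ.nonneg_normed φ.integral_normed
    hu.aestronglyMeasurable fun y hy => ?_
  have hy' : y ∈ Icc (a - r) (b + r) :=
    thickening_Icc_subset (mem_thickening_iff.2 ⟨x, hx, hy⟩)
  rw [← huw hy']
  exact hε _ (hmaps hy') x hx (dist_homothety_lt hab hr hx hy)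

/-- Lemma 5: every nonnegative concave function on `[a,b]` (continuous up to
the endpoints) is the uniform limit on `[a,b]` of a sequence of nonnegative
concave `C²` functions. -/
theorem concave_smooth_approximation
    (a b : ℝ) (hab : a < b) (w : ℝ → ℝ)
    (hw0 : ∀ x ∈ Set.Icc a b, 0 ≤ w x)
    (hwconc : ConcaveOn ℝ (Set.Icc a b) w)
    (hwcont : ContinuousOn w (Set.Icc a b)) :
    ∃ W : ℕ → ℝ → ℝ,
      (∀ n : ℕ, ConcaveOn ℝ (Set.Icc a b) (W n) ∧
        (∀ x ∈ Set.Icc a b, 0 ≤ W n x) ∧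
        ContDiffOn ℝ 2 (W n) (Set.Icc a b)) ∧
      TendstoUniformlyOn W w Filter.atTop (Set.Icc a b) := by
  choose W hconc hnonneg hsmooth hdist using fun n : ℕ =>
    exists_concaveOn_contDiff_dist_le hab.le hw0 hwconc hwcont (Nat.one_div_pos_of_nat (n := n))
  refine ⟨W, fun n => ⟨hconc n, hnonneg n, (hsmooth n).contDiffOn.of_le (by norm_cast)⟩, ?_⟩
  rw [Metric.tendstoUniformlyOn_iff]
  intro ε hε
  obtain ⟨d, hd, hwd⟩ := Metric.uniformContinuousOn_iff.1
    (isCompact_Icc.uniformContinuousOn_of_continuous hwcont) (ε / 2) (half_pos hε)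
  filter_upwards [tendsto_one_div_add_atTop_nhds_zero_nat.eventually (gt_mem_nhds (half_pos hd))]
    with n hn x hx
  rw [dist_comm]
  refine (hdist n (ε / 2) (fun p hp q hq hpq => (hwd p hp q hq ?_).le) x hx).trans_lt
    (half_lt_self hε)
  linarith
end

section
/- Let a < b be real numbers, let w : [a,b] → [0,∞) be a concave function, and let f ∈ C²[a,b] satisfy f(a) = f(b) = 0. Then ∫ₐᵇ w(x) f'(x)² dx ≤ − ∫ₐᵇ w(x) f(x) f''(x) dx. -/
/-!
Since `(f²)'' = 2 (f'² + f f'')`, the claim is `∫ w g'' ≤ 0` for `g = f²`, which is nonnegative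
with `g = g' = 0` at both ends. Replace `w` on each piece `[xᵢ, xᵢ₊₁]` of a partition by its chord
`ℓᵢ`, of slope `sᵢ`. Integrating `ℓᵢ g''` by parts twice, the terms `w g'` telescope away and
summation by parts leaves `-∑ (sᵢ₋₁ - sᵢ) g(xᵢ)`, which is `≤ 0` because concavity makes the slopes
decrease. On the uniform partition of mesh `Δ`, concavity also gives `0 ≤ w - ℓᵢ ≤ (sᵢ₋₁ - sᵢ) Δ`
on the `i`-th piece; these bounds telescope, so replacing `w` by its chords costs only `O(Δ)`.
-/

open Set MeasureTheory Filter Topology intervalIntegral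

theorem integral_affine_mul_eq {ℓ g g' g'' : ℝ → ℝ} {β u v : ℝ} (huv : u ≤ v)
    (hℓ : ∀ t, HasDerivAt ℓ β t)
    (hg : ∀ t ∈ Icc u v, HasDerivWithinAt g (g' t) (Icc u v) t)
    (hg' : ∀ t ∈ Icc u v, HasDerivWithinAt g' (g'' t) (Icc u v) t)
    (hg'' : ContinuousOn g'' (Icc u v)) :
    ∫ t in u..v, ℓ t * g'' t = ℓ v * g' v - ℓ u * g' u - β * (g v - g u) := by
  have hF : ∀ t ∈ Icc u v, HasDerivWithinAt (fun t => ℓ t * g' t - β * g t)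
      (ℓ t * g'' t) (Icc u v) t := fun t ht =>
    (((hℓ t).hasDerivWithinAt.mul (hg' t ht)).sub ((hg t ht).const_mul β)).congr_deriv (by ring)
  have hℓc : Continuous ℓ := continuous_iff_continuousAt.2 fun t => (hℓ t).continuousAt
  rw [integral_eq_sub_of_hasDerivAt_of_le huv (fun t ht => (hF t ht).continuousWithinAt)
    (fun t ht => (hF t (Ioo_subset_Icc_self ht)).hasDerivAt (Icc_mem_nhds ht.1 ht.2))
    ((hℓc.continuousOn.mul hg'').intervalIntegrable_of_Icc huv)]
  ring

theorem sum_mul_sub_nonneg_of_antitone {s h : ℕ → ℝ} {n : ℕ}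
    (hs : ∀ i, i + 1 < n → s (i + 1) ≤ s i) (h0 : h 0 = 0) (hn : h n = 0)
    (hh : ∀ i ≤ n, 0 ≤ h i) :
    0 ≤ ∑ i ∈ Finset.range n, s i * (h (i + 1) - h i) := by
  rcases n with _ | m
  · simp
  have hparts : ∑ i ∈ Finset.range (m + 1), s i * (h (i + 1) - h i)
      = ∑ i ∈ Finset.range m, (s i - s (i + 1)) * h (i + 1) := by
    simp only [mul_sub, Finset.sum_sub_distrib, sub_mul]
    rw [Finset.sum_range_succ, Finset.sum_range_succ' (fun i => s i * h i), hn, h0]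
    ring
  rw [hparts]
  refine Finset.sum_nonneg fun i hi => ?_
  have hi := Finset.mem_range.1 hi
  exact mul_nonneg (sub_nonneg.2 (hs i (by omega))) (hh _ (by omega))

noncomputable def chord (w : ℝ → ℝ) (u v t : ℝ) : ℝ := w u + slope w u v * (t - u)

theorem hasDerivAt_chord (w : ℝ → ℝ) (u v t : ℝ) : HasDerivAt (chord w u v) (slope w u v) t := by
  have h := (((hasDerivAt_id t).sub_const u).const_mul (slope w u v)).const_add (w u)
  rw [mul_one] at h
  exact h

theorem continuous_chord (w : ℝ → ℝ) (u v : ℝ) : Continuous (chord w u v) :=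
  continuous_iff_continuousAt.2 fun t => (hasDerivAt_chord w u v t).continuousAt

theorem chord_left (w : ℝ → ℝ) (u v : ℝ) : chord w u v u = w u := by simp [chord]

theorem chord_right (w : ℝ → ℝ) {u v : ℝ} (huv : u ≠ v) : chord w u v v = w v := by
  rw [chord, slope_def_field]
  field_simp [sub_ne_zero.2 huv.symm]
  ring

theorem min_le_chord (w : ℝ → ℝ) {u v t : ℝ} (huv : u < v) (ht : t ∈ Icc u v) :
    min (w u) (w v) ≤ chord w u v t := by
  have hvu : 0 < v - u := sub_pos.2 huv
  have hcomb : chord w u v t = ((v - t) * w u + (t - u) * w v) / (v - u) := by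
    rw [chord, slope_def_field]; field_simp; ring
  rw [hcomb, le_div_iff₀ hvu]
  nlinarith [min_le_left (w u) (w v), min_le_right (w u) (w v), ht.1, ht.2]

section Concave

variable {s : Set ℝ} {w : ℝ → ℝ}

theorem ConcaveOn.chord_le (hw : ConcaveOn ℝ s w) {u v t : ℝ} (hu : u ∈ s) (hv : v ∈ s)
    (ht : t ∈ Icc u v) : chord w u v t ≤ w t := by
  rcases eq_or_lt_of_le ht.1 with rfl | hut
  · rw [chord_left]
  have hts : t ∈ s := hw.1.ordConnected.out hu hv ht
  have hslope : slope w u v ≤ slope w u t :=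
    hw.slope_anti hu ⟨hts, hut.ne'⟩ ⟨hv, (hut.trans_le ht.2).ne'⟩ ht.2
  have hwt := chord_right w hut.ne
  rw [chord] at hwt ⊢
  nlinarith [sub_pos.2 hut]

theorem ConcaveOn.slope_le_slope (hw : ConcaveOn ℝ s w) {p u v : ℝ} (hp : p ∈ s) (hu : u ∈ s)
    (hv : v ∈ s) (hpu : p < u) (huv : u < v) : slope w u v ≤ slope w p u := by
  rw [slope_comm w p u]
  exact hw.slope_anti hu ⟨hp, hpu.ne⟩ ⟨hv, huv.ne'⟩ (hpu.trans huv).le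

theorem ConcaveOn.sub_chord_le (hw : ConcaveOn ℝ s w) {p u v t : ℝ} (hp : p ∈ s) (hu : u ∈ s)
    (ht : t ∈ s) (hpu : p < u) (hut : u ≤ t) :
    w t - chord w u v t ≤ (slope w p u - slope w u v) * (t - u) := by
  rcases eq_or_lt_of_le hut with rfl | hut
  · simp [chord_left]
  have hwt := chord_right w hut.ne
  have := hw.slope_le_slope hp hu ht hpu hut
  rw [chord] at hwt ⊢
  nlinarith [sub_pos.2 hut]

end Concave

section Interval

variable {a b : ℝ} {w : ℝ → ℝ}

theorem ConcaveOn.exists_forall_abs_le (hw : ConcaveOn ℝ (Icc a b) w) :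
    ∃ B, ∀ x ∈ Icc a b, |w x| ≤ B := by
  refine ⟨2 * |w ((a + b) / 2)| + |w a| + |w b|, fun x hx => ?_⟩
  have hab : a ≤ b := hx.1.trans hx.2
  have hx' : a + b - x ∈ Icc a b := ⟨by linarith [hx.2], by linarith [hx.1]⟩
  have hlow : ∀ y ∈ Icc a b, -(|w a| + |w b|) ≤ w y := fun y hy =>
    (le_min (by linarith [neg_abs_le (w a), abs_nonneg (w b)])
      (by linarith [neg_abs_le (w b), abs_nonneg (w a)])).trans
      (hw.min_le_of_mem_Icc (left_mem_Icc.2 hab) (right_mem_Icc.2 hab) hy)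
  -- `x` and its reflection `a + b - x` average to the midpoint
  have hmid := hw.2 hx hx' (by norm_num : (0 : ℝ) ≤ 1 / 2) (by norm_num : (0 : ℝ) ≤ 1 / 2)
    (by norm_num)
  rw [smul_eq_mul, smul_eq_mul, smul_eq_mul, smul_eq_mul,
    show 1 / 2 * x + 1 / 2 * (a + b - x) = (a + b) / 2 by ring] at hmid
  exact abs_le.2 ⟨by linarith [hlow x hx, abs_nonneg (w ((a + b) / 2))],
    by linarith [hlow _ hx', le_abs_self (w ((a + b) / 2))]⟩

theorem ConcaveOn.intervalIntegrable (hw : ConcaveOn ℝ (Icc a b) w) (hab : a ≤ b) :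
    IntervalIntegrable w volume a b := by
  obtain ⟨B, hB⟩ := hw.exists_forall_abs_le
  have hcont : ContinuousOn w (Ioo a b) := by
    simpa only [interior_Icc] using hw.continuousOn_interior
  rw [intervalIntegrable_iff_integrableOn_Ioo_of_le hab]
  refine Integrable.of_bound (hcont.aestronglyMeasurable measurableSet_Ioo) B ?_
  filter_upwards [ae_restrict_mem measurableSet_Ioo] with x hx
  exact hB x (Ioo_subset_Icc_self hx)

end Interval

theorem integral_mul_le_integral_mul_add {f ℓ k : ℝ → ℝ} {u v c M : ℝ} (huv : u ≤ v)
    (hf : IntervalIntegrable (fun t => f t * k t) volume u v)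
    (hℓ : IntervalIntegrable (fun t => ℓ t * k t) volume u v)
    (hle : ∀ t ∈ Icc u v, ℓ t ≤ f t) (hle' : ∀ t ∈ Icc u v, f t ≤ ℓ t + c)
    (hk : ∀ t ∈ Icc u v, |k t| ≤ M) :
    ∫ t in u..v, f t * k t ≤ (∫ t in u..v, ℓ t * k t) + (v - u) * (c * M) := by
  have hpt : ∀ t ∈ Icc u v, f t * k t ≤ ℓ t * k t + c * M := fun t ht => by
    have h1 := hle t ht
    have h2 := hle' t ht
    have h3 := hk t ht
    have : (f t - ℓ t) * k t ≤ (f t - ℓ t) * |k t| :=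
      mul_le_mul_of_nonneg_left (le_abs_self _) (by linarith)
    nlinarith [abs_nonneg (k t)]
  calc ∫ t in u..v, f t * k t ≤ ∫ t in u..v, (ℓ t * k t + c * M) :=
        integral_mono_on huv hf (hℓ.add intervalIntegrable_const) hpt
    _ = _ := by
        rw [integral_add hℓ intervalIntegrable_const, intervalIntegral.integral_const, smul_eq_mul]

theorem ConcaveOn.sum_integral_chord_mul_nonpos {a b : ℝ} {w g g' g'' : ℝ → ℝ} {x : ℕ → ℝ}
    {n : ℕ} (hw : ConcaveOn ℝ (Icc a b) w) (hx : StrictMono x) (hx0 : x 0 = a) (hxn : x n = b)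
    (hg : ∀ t ∈ Icc a b, HasDerivWithinAt g (g' t) (Icc a b) t)
    (hg' : ∀ t ∈ Icc a b, HasDerivWithinAt g' (g'' t) (Icc a b) t)
    (hg'' : ContinuousOn g'' (Icc a b)) (hg0 : ∀ t ∈ Icc a b, 0 ≤ g t)
    (hga : g a = 0) (hgb : g b = 0) (hg'a : g' a = 0) (hg'b : g' b = 0) :
    ∑ i ∈ Finset.range n, ∫ t in x i..x (i + 1), chord w (x i) (x (i + 1)) t * g'' t ≤ 0 := by
  have hmem : ∀ i ≤ n, x i ∈ Icc a b := fun i hi =>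
    ⟨hx0 ▸ hx.monotone (Nat.zero_le i), hxn ▸ hx.monotone hi⟩
  have hsub : ∀ i < n, Icc (x i) (x (i + 1)) ⊆ Icc a b := fun i hi =>
    Icc_subset_Icc (hmem i hi.le).1 (hmem (i + 1) hi).2
  have hpiece : ∀ i < n, ∫ t in x i..x (i + 1), chord w (x i) (x (i + 1)) t * g'' t
      = (w (x (i + 1)) * g' (x (i + 1)) - w (x i) * g' (x i))
        - slope w (x i) (x (i + 1)) * (g (x (i + 1)) - g (x i)) := fun i hi => by
    rw [integral_affine_mul_eq (hx (Nat.lt_succ_self i)).le (hasDerivAt_chord w _ _)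
      (fun t ht => (hg t (hsub i hi ht)).mono (hsub i hi))
      (fun t ht => (hg' t (hsub i hi ht)).mono (hsub i hi)) (hg''.mono (hsub i hi)),
      chord_left, chord_right w (hx (Nat.lt_succ_self i)).ne]
  rw [Finset.sum_congr rfl fun i hi => hpiece i (Finset.mem_range.1 hi), Finset.sum_sub_distrib,
    Finset.sum_range_sub (fun i => w (x i) * g' (x i)), hx0, hxn, hg'a, hg'b]
  have habel := sum_mul_sub_nonneg_of_antitone (s := fun i => slope w (x i) (x (i + 1)))
    (h := fun i => g (x i)) (n := n)
    (fun i hi => hw.slope_le_slope (hmem i (by omega)) (hmem (i + 1) (by omega))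
      (hmem (i + 2) hi) (hx (by omega)) (hx (by omega)))
    (by simp [hx0, hga]) (by simp [hxn, hgb]) (fun i hi => hg0 _ (hmem i hi))
  linarith

noncomputable def uniformNode (a b : ℝ) (n i : ℕ) : ℝ := a + i * ((b - a) / n)

theorem uniformNode_zero (a b : ℝ) (n : ℕ) : uniformNode a b n 0 = a := by simp [uniformNode]

theorem uniformNode_self (a b : ℝ) {n : ℕ} (hn : n ≠ 0) : uniformNode a b n n = b := by
  simp only [uniformNode]
  field_simp
  ring

theorem uniformNode_succ_sub (a b : ℝ) (n i : ℕ) :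
    uniformNode a b n (i + 1) - uniformNode a b n i = (b - a) / n := by
  simp only [uniformNode]
  push_cast
  ring

theorem strictMono_uniformNode {a b : ℝ} (hab : a < b) {n : ℕ} (hn : n ≠ 0) :
    StrictMono (uniformNode a b n) :=
  strictMono_nat_of_lt_succ fun i => by
    have hΔ : 0 < (b - a) / n := div_pos (sub_pos.2 hab) (by positivity)
    linarith [uniformNode_succ_sub a b n i]

theorem uniformNode_mem_Icc {a b : ℝ} (hab : a < b) {n i : ℕ} (hn : n ≠ 0) (hi : i ≤ n) :
    uniformNode a b n i ∈ Icc a b := by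
  have hmono := (strictMono_uniformNode hab hn).monotone
  have h0 := hmono (Nat.zero_le i)
  have hn' := hmono hi
  rw [uniformNode_zero] at h0
  rw [uniformNode_self a b hn] at hn'
  exact ⟨h0, hn'⟩

theorem ConcaveOn.exists_le_chord_add {a b B : ℝ} {w : ℝ → ℝ} (hab : a < b)
    (hw : ConcaveOn ℝ (Icc a b) w) (hwB : ∀ x ∈ Icc a b, |w x| ≤ B) {n : ℕ} (hn : n ≠ 0) :
    ∃ e : ℕ → ℝ, ∑ i ∈ Finset.range n, e i ≤ 6 * B ∧
      ∀ i < n, ∀ t ∈ Icc (uniformNode a b n i) (uniformNode a b n (i + 1)),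
        w t ≤ chord w (uniformNode a b n i) (uniformNode a b n (i + 1)) t + e i := by
  set x := uniformNode a b n
  set s : ℕ → ℝ := fun i => slope w (x i) (x (i + 1))
  have hx := strictMono_uniformNode hab hn
  have hmem : ∀ i ≤ n, x i ∈ Icc a b := fun i hi => uniformNode_mem_Icc hab hn hi
  have hslope : ∀ i, i + 2 ≤ n → s (i + 1) ≤ s i := fun i hi =>
    hw.slope_le_slope (hmem i (by omega)) (hmem (i + 1) (by omega)) (hmem (i + 2) hi)
      (hx (by omega)) (hx (by omega))
  have hsΔ : ∀ i, s i * ((b - a) / n) = w (x (i + 1)) - w (x i) := fun i => by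
    rw [← uniformNode_succ_sub a b n i, mul_comm, ← smul_eq_mul, sub_smul_slope, vsub_eq_sub]
  obtain ⟨m, rfl⟩ : ∃ m, n = m + 1 := ⟨n - 1, by omega⟩
  -- on the first piece there is no slope to the left to compare with
  refine ⟨fun | 0 => 2 * B | j + 1 => (s j - s (j + 1)) * ((b - a) / (m + 1 : ℕ)),
    ?_, fun i hi t ht => ?_⟩
  · rw [Finset.sum_range_succ', ← Finset.sum_mul, Finset.sum_range_sub', sub_mul, hsΔ, hsΔ]
    dsimp only
    have := abs_le.1 (hwB _ (hmem 0 (by omega)))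
    have := abs_le.1 (hwB _ (hmem 1 (by omega)))
    have := abs_le.1 (hwB _ (hmem m (by omega)))
    have := abs_le.1 (hwB _ (hmem (m + 1) le_rfl))
    linarith
  rcases i with _ | j
  · have hlow : min (w (x 0)) (w (x 1)) ≤ chord w (x 0) (x 1) t :=
      min_le_chord w (hx (Nat.lt_succ_self 0)) ht
    have htB := abs_le.1 (hwB t ⟨(hmem 0 (by omega)).1.trans ht.1, ht.2.trans (hmem 1 hi).2⟩)
    have h0 := abs_le.1 (hwB _ (hmem 0 (by omega)))
    have h1 := abs_le.1 (hwB _ (hmem 1 hi))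
    change w t ≤ chord w (x 0) (x 1) t + 2 * B
    rcases min_le_iff.1 hlow with h | h <;> linarith
  · have htab : t ∈ Icc a b := ⟨(hmem (j + 1) hi.le).1.trans ht.1, ht.2.trans (hmem (j + 2) hi).2⟩
    have herr := hw.sub_chord_le (v := x (j + 2)) (hmem j (by omega)) (hmem (j + 1) hi.le) htab
      (hx (Nat.lt_succ_self j)) ht.1
    have hwidth : t - x (j + 1) ≤ (b - a) / (m + 1 : ℕ) := by
      linarith [ht.2, uniformNode_succ_sub a b (m + 1) (j + 1)]
    have := mul_le_mul_of_nonneg_left hwidth (sub_nonneg.2 (hslope j hi))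
    dsimp only
    linarith

theorem ConcaveOn.integral_mul_le_div {a b B M : ℝ} {w g g' g'' : ℝ → ℝ} (hab : a < b)
    (hw : ConcaveOn ℝ (Icc a b) w) (hwB : ∀ x ∈ Icc a b, |w x| ≤ B)
    (hg : ∀ x ∈ Icc a b, HasDerivWithinAt g (g' x) (Icc a b) x)
    (hg' : ∀ x ∈ Icc a b, HasDerivWithinAt g' (g'' x) (Icc a b) x)
    (hg'' : ContinuousOn g'' (Icc a b)) (hg''M : ∀ x ∈ Icc a b, |g'' x| ≤ M)
    (hg0 : ∀ x ∈ Icc a b, 0 ≤ g x) (hga : g a = 0) (hgb : g b = 0) (hg'a : g' a = 0)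
    (hg'b : g' b = 0) {n : ℕ} (hn : n ≠ 0) :
    ∫ x in a..b, w x * g'' x ≤ 6 * B * M * (b - a) / n := by
  set x := uniformNode a b n
  have hx := strictMono_uniformNode hab hn
  have hsub : ∀ i < n, Icc (x i) (x (i + 1)) ⊆ Icc a b := fun i hi =>
    Icc_subset_Icc (uniformNode_mem_Icc hab hn hi.le).1 (uniformNode_mem_Icc hab hn hi).2
  have hint : ∀ i < n, IntervalIntegrable (fun t => w t * g'' t) volume (x i) (x (i + 1)) :=
    fun i hi =>
      ((hw.intervalIntegrable hab.le).mul_continuousOn (by rwa [uIcc_of_le hab.le])).mono_set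
        (by rw [uIcc_of_le hab.le, uIcc_of_le (hx (Nat.lt_succ_self i)).le]; exact hsub i hi)
  obtain ⟨e, he, hwe⟩ := hw.exists_le_chord_add hab hwB hn
  have hpiece : ∀ i < n, ∫ t in x i..x (i + 1), w t * g'' t
      ≤ (∫ t in x i..x (i + 1), chord w (x i) (x (i + 1)) t * g'' t) + (b - a) / n * (e i * M) := by
    intro i hi
    have hchord : IntervalIntegrable (fun t => chord w (x i) (x (i + 1)) t * g'' t) volume
        (x i) (x (i + 1)) :=
      ((continuous_chord w _ _).continuousOn.mul (hg''.mono (hsub i hi))).intervalIntegrable_of_Icc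
        (hx (Nat.lt_succ_self i)).le
    rw [← uniformNode_succ_sub a b n i]
    exact integral_mul_le_integral_mul_add (hx (Nat.lt_succ_self i)).le (hint i hi) hchord
      (fun t => hw.chord_le (uniformNode_mem_Icc hab hn hi.le) (uniformNode_mem_Icc hab hn hi))
      (hwe i hi) (fun t ht => hg''M t (hsub i hi ht))
  have hM : 0 ≤ M := (abs_nonneg _).trans (hg''M a (left_mem_Icc.2 hab.le))
  calc ∫ x in a..b, w x * g'' x
      = ∑ i ∈ Finset.range n, ∫ t in x i..x (i + 1), w t * g'' t := by
        rw [sum_integral_adjacent_intervals hint, show x 0 = a from uniformNode_zero a b n,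
          show x n = b from uniformNode_self a b hn]
    _ ≤ ∑ i ∈ Finset.range n, ((∫ t in x i..x (i + 1), chord w (x i) (x (i + 1)) t * g'' t)
          + (b - a) / n * (e i * M)) :=
        Finset.sum_le_sum fun i hi => hpiece i (Finset.mem_range.1 hi)
    _ = ∑ i ∈ Finset.range n, (∫ t in x i..x (i + 1), chord w (x i) (x (i + 1)) t * g'' t)
          + (b - a) / n * M * ∑ i ∈ Finset.range n, e i := by
        rw [Finset.sum_add_distrib, Finset.mul_sum]
        congr 1
        exact Finset.sum_congr rfl fun i _ => by ring
    _ ≤ 0 + (b - a) / n * M * (6 * B) := by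
        gcongr
        exact hw.sum_integral_chord_mul_nonpos hx (uniformNode_zero a b n) (uniformNode_self a b hn)
          hg hg' hg'' hg0 hga hgb hg'a hg'b
    _ = 6 * B * M * (b - a) / n := by ring

theorem ConcaveOn.integral_mul_nonpos {a b : ℝ} {w g g' g'' : ℝ → ℝ} (hab : a < b)
    (hw : ConcaveOn ℝ (Icc a b) w)
    (hg : ∀ x ∈ Icc a b, HasDerivWithinAt g (g' x) (Icc a b) x)
    (hg' : ∀ x ∈ Icc a b, HasDerivWithinAt g' (g'' x) (Icc a b) x)
    (hg'' : ContinuousOn g'' (Icc a b)) (hg0 : ∀ x ∈ Icc a b, 0 ≤ g x)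
    (hga : g a = 0) (hgb : g b = 0) (hg'a : g' a = 0) (hg'b : g' b = 0) :
    ∫ x in a..b, w x * g'' x ≤ 0 := by
  obtain ⟨B, hB⟩ := hw.exists_forall_abs_le
  obtain ⟨M, hM⟩ := isCompact_Icc.exists_bound_of_continuousOn hg''
  refine ge_of_tendsto (tendsto_const_div_atTop_nhds_zero_nat (6 * B * M * (b - a)))
    (eventually_atTop.2 ⟨1, fun n hn => ?_⟩)
  exact hw.integral_mul_le_div hab hB hg hg' hg'' (fun x hx => (Real.norm_eq_abs _) ▸ hM x hx)
    hg0 hga hgb hg'a hg'b (by omega)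

theorem first_inequality_general
    (a b : ℝ) (hab : a < b) (w f f' f'' : ℝ → ℝ)
    (hwconc : ConcaveOn ℝ (Set.Icc a b) w)
    (hf' : ∀ x ∈ Set.Icc a b, HasDerivWithinAt f (f' x) (Set.Icc a b) x)
    (hf'' : ∀ x ∈ Set.Icc a b, HasDerivWithinAt f' (f'' x) (Set.Icc a b) x)
    (hf''cont : ContinuousOn f'' (Set.Icc a b))
    (hfa : f a = 0) (hfb : f b = 0) :
    ∫ x in a..b, w x * f' x ^ 2 ≤ - ∫ x in a..b, w x * (f x * f'' x) := by
  have hfc : ContinuousOn f (Icc a b) := fun x hx => (hf' x hx).continuousWithinAt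
  have hf'c : ContinuousOn f' (Icc a b) := fun x hx => (hf'' x hx).continuousWithinAt
  have hsq := hwconc.integral_mul_nonpos hab (g := fun x => f x ^ 2)
    (g' := fun x => 2 * (f x * f' x)) (g'' := fun x => 2 * (f' x ^ 2 + f x * f'' x))
    (fun x hx => ((hf' x hx).pow 2).congr_deriv (by ring))
    (fun x hx => (((hf' x hx).mul (hf'' x hx)).const_mul 2).congr_deriv (by ring))
    (continuousOn_const.mul ((hf'c.pow 2).add (hfc.mul hf''cont)))
    (fun x _ => sq_nonneg (f x)) (by simp [hfa]) (by simp [hfb]) (by simp [hfa]) (by simp [hfb])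
  have hint : ∀ φ : ℝ → ℝ, ContinuousOn φ (Icc a b) →
      IntervalIntegrable (fun x => w x * φ x) volume a b := fun _ hφ =>
    (hwconc.intervalIntegrable hab.le).mul_continuousOn (by rwa [uIcc_of_le hab.le])
  have hsplit : ∫ x in a..b, w x * (2 * (f' x ^ 2 + f x * f'' x))
      = 2 * ((∫ x in a..b, w x * f' x ^ 2) + ∫ x in a..b, w x * (f x * f'' x)) := by
    rw [← integral_add (hint (fun x => f' x ^ 2) (hf'c.pow 2))
      (hint (fun x => f x * f'' x) (hfc.mul hf''cont)), ← intervalIntegral.integral_const_mul]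
    exact integral_congr fun x _ => by ring
  linarith

/-- Inequality (3.7)/(3.9): for a concave weight `w : [a,b] → [0,∞)` and
`f ∈ C²[a,b]` with `f a = f b = 0`, `∫ₐᵇ w f'² ≤ − ∫ₐᵇ w f f''`. -/
theorem first_inequality
    (a b : ℝ) (hab : a < b) (w f f' f'' : ℝ → ℝ)
    (hw0 : ∀ x ∈ Set.Icc a b, 0 ≤ w x)
    (hwconc : ConcaveOn ℝ (Set.Icc a b) w)
    (hf' : ∀ x ∈ Set.Icc a b, HasDerivWithinAt f (f' x) (Set.Icc a b) x)
    (hf'' : ∀ x ∈ Set.Icc a b, HasDerivWithinAt f' (f'' x) (Set.Icc a b) x)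
    (hf''cont : ContinuousOn f'' (Set.Icc a b))
    (hfa : f a = 0) (hfb : f b = 0) :
    ∫ x in a..b, w x * f' x ^ 2 ≤ - ∫ x in a..b, w x * (f x * f'' x) :=
  first_inequality_general a b hab w f f' f'' hwconc hf' hf'' hf''cont hfa hfb
end

section
/- Let W : [0,π] → ℝ be a concave function (extended continuously to the endpoints). If ∫₀^π W(t) cos²(t) dt = ∫₀^π W(t) sin²(t) dt, then W is linear (affine) on [0,π], i.e., there exist real constants α, β with W(t) = αt + β for all t ∈ [0,π]. -/
/-!
Let `ℓ` be the secant line of `W` through `π/4` and `3π/4`. Concavity puts `W` above `ℓ` between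
these nodes and below it outside, while `cos 2t` is `≤ 0` between them and `≥ 0` outside, so
`(ℓ - W) cos 2t ≥ 0` on `[0,π]`. The hypothesis says `∫ W cos 2t = 0`, and `cos 2t` is orthogonal
to affine functions on `[0,π]`, so this continuous nonnegative function has integral zero and
vanishes. Off the zeros `π/4, 3π/4` of `cos 2t` this forces `W = ℓ`, and at them `W = ℓ` holds by
construction.
-/

open Real Set intervalIntegral

noncomputable def secantLine (f : ℝ → ℝ) (p q t : ℝ) : ℝ := f p + slope f p q * (t - p)

@[simp] lemma secantLine_left (f : ℝ → ℝ) (p q : ℝ) : secantLine f p q p = f p := by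
  simp [secantLine]

@[simp] lemma secantLine_right (f : ℝ → ℝ) {p q : ℝ} (hpq : p ≠ q) : secantLine f p q q = f q := by
  rw [secantLine, slope_def_field, div_mul_cancel₀ _ (sub_ne_zero.2 hpq.symm)]
  ring

lemma ConcaveOn.secantLine_sub_mul_nonneg {s : Set ℝ} {f : ℝ → ℝ} (hf : ConcaveOn ℝ s f)
    {p q t : ℝ} (hp : p ∈ s) (hq : q ∈ s) (hpq : p < q) (ht : t ∈ s) :
    0 ≤ (secantLine f p q t - f t) * ((t - p) * (t - q)) := by
  rcases eq_or_ne t p with rfl | htp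
  · simp
  have hft : f t = f p + slope f p t * (t - p) := by
    rw [slope_def_field, div_mul_cancel₀ _ (sub_ne_zero.2 htp)]
    ring
  have hsign : 0 ≤ (slope f p q - slope f p t) * (t - q) := by
    have hanti := hf.slope_anti hp
    rcases le_total t q with htq | hqt
    · exact mul_nonneg_of_nonpos_of_nonpos
        (sub_nonpos.2 (hanti ⟨ht, htp⟩ ⟨hq, hpq.ne'⟩ htq)) (sub_nonpos.2 htq)
    · exact mul_nonneg (sub_nonneg.2 (hanti ⟨hq, hpq.ne'⟩ ⟨ht, htp⟩ hqt)) (sub_nonneg.2 hqt)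
  calc (0 : ℝ) ≤ (t - p) ^ 2 * ((slope f p q - slope f p t) * (t - q)) :=
        mul_nonneg (sq_nonneg _) hsign
    _ = (secantLine f p q t - f t) * ((t - p) * (t - q)) := by
        rw [secantLine, hft]; ring

lemma ContinuousOn.eqOn_zero_of_integral_eq_zero {f : ℝ → ℝ} {a b : ℝ} (hab : a < b)
    (hfc : ContinuousOn f (Icc a b)) (hf : ∀ t ∈ Icc a b, 0 ≤ f t)
    (hint : ∫ t in a..b, f t = 0) : EqOn f 0 (Icc a b) := by
  intro t ht
  by_contra hne
  have := integral_pos hab hfc (fun x hx ↦ hf x (Ioc_subset_Icc_self hx))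
    ⟨t, ht, (hf t ht).lt_of_ne' hne⟩
  exact this.ne' hint

namespace Real

lemma cos_two_mul_eq_neg_two_mul_sin_mul_sin (t : ℝ) :
    cos (2 * t) = -2 * sin (t - π / 4) * sin (3 * π / 4 - t) := by
  have : sin (3 * π / 4 - t) = cos (t - π / 4) := by
    rw [← cos_pi_div_two_sub]; ring_nf
  rw [this, neg_mul, neg_mul, ← sin_two_mul, ← neg_eq_iff_eq_neg, ← sin_sub_pi_div_two]
  ring_nf

lemma mul_sin_nonneg {x : ℝ} (h1 : -π ≤ x) (h2 : x ≤ π) : 0 ≤ x * sin x := by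
  rcases le_total 0 x with hx | hx
  · exact mul_nonneg hx (sin_nonneg_of_nonneg_of_le_pi hx h2)
  · exact mul_nonneg_of_nonpos_of_nonpos hx (sin_nonpos_of_nonpos_of_neg_pi_le hx h1)

lemma integral_cos_two_mul : ∫ t in (0:ℝ)..π, cos (2 * t) = 0 := by
  simp [integral_comp_mul_left (fun t ↦ cos t) two_ne_zero]

lemma integral_mul_cos_two_mul : ∫ t in (0:ℝ)..π, t * cos (2 * t) = 0 := by
  have hderiv : ∀ t ∈ uIcc 0 π,
      HasDerivAt (fun s ↦ s * sin (2 * s) / 2 + cos (2 * s) / 4) (t * cos (2 * t)) t := by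
    intro t _
    have h2 : HasDerivAt (fun s : ℝ ↦ 2 * s) 2 t := by simpa using (hasDerivAt_id t).const_mul 2
    have := (((hasDerivAt_id' t).mul h2.sin).div_const 2).add (h2.cos.div_const 4)
    exact this.congr_deriv (by ring)
  rw [integral_eq_sub_of_hasDerivAt hderiv (Continuous.intervalIntegrable (by fun_prop) _ _)]
  simp

lemma cos_two_mul_mul_nonneg {t : ℝ} (ht : t ∈ Icc 0 π) :
    0 ≤ cos (2 * t) * ((t - π / 4) * (t - 3 * π / 4)) := by
  have hπ := pi_pos
  have h1 := mul_sin_nonneg (x := t - π / 4) (by linarith [ht.1]) (by linarith [ht.2])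
  have h2 := mul_sin_nonneg (x := 3 * π / 4 - t) (by linarith [ht.2]) (by linarith [ht.1])
  rw [cos_two_mul_eq_neg_two_mul_sin_mul_sin]
  nlinarith

lemma eq_or_eq_of_cos_two_mul_eq_zero {t : ℝ} (ht : t ∈ Icc 0 π) (h : cos (2 * t) = 0) :
    t = π / 4 ∨ t = 3 * π / 4 := by
  have hπ := pi_pos
  rw [cos_two_mul_eq_neg_two_mul_sin_mul_sin, mul_eq_zero, mul_eq_zero,
    sin_eq_zero_iff_of_lt_of_lt (by linarith [ht.1]) (by linarith [ht.2]),
    sin_eq_zero_iff_of_lt_of_lt (by linarith [ht.2]) (by linarith [ht.1])] at h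
  rcases h with (h | h) | h
  · norm_num at h
  · exact .inl (by linarith)
  · exact .inr (by linarith)

end Real

theorem ConcaveOn.eqOn_secantLine_of_integral_mul_eq_zero {W φ : ℝ → ℝ} {a b p q : ℝ}
    (hW : ConcaveOn ℝ (Icc a b) W) (hWc : ContinuousOn W (Icc a b))
    (hφc : ContinuousOn φ (Icc a b)) (hp : p ∈ Icc a b) (hq : q ∈ Icc a b) (hpq : p < q)
    (hφ_sign : ∀ t ∈ Icc a b, 0 ≤ φ t * ((t - p) * (t - q)))
    (hφ_eq_zero : ∀ t ∈ Icc a b, φ t = 0 → t = p ∨ t = q)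
    (hφ : ∫ t in a..b, φ t = 0) (htφ : ∫ t in a..b, t * φ t = 0)
    (hWφ : ∫ t in a..b, W t * φ t = 0) :
    EqOn W (secantLine W p q) (Icc a b) := by
  have hab : a < b := hp.1.trans_lt (hpq.trans_le hq.2)
  set g := fun t ↦ (secantLine W p q t - W t) * φ t with hg
  have hg_nonneg : ∀ t ∈ Icc a b, 0 ≤ g t := by
    intro t ht
    rcases eq_or_ne t p with rfl | htp
    · simp [hg]
    rcases eq_or_ne t q with rfl | htq
    · simp [hg, hpq.ne]
    have hs : 0 < ((t - p) * (t - q)) ^ 2 :=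
      sq_pos_of_ne_zero (mul_ne_zero (sub_ne_zero.2 htp) (sub_ne_zero.2 htq))
    refine nonneg_of_mul_nonneg_left ?_ hs
    calc 0 ≤ ((secantLine W p q t - W t) * ((t - p) * (t - q))) * (φ t * ((t - p) * (t - q))) :=
          mul_nonneg (hW.secantLine_sub_mul_nonneg hp hq hpq ht) (hφ_sign t ht)
      _ = g t * ((t - p) * (t - q)) ^ 2 := by ring
  have hg_cont : ContinuousOn g (Icc a b) := by
    simp only [hg, secantLine]
    fun_prop
  have hg_int : ∫ t in a..b, g t = 0 := by
    have hg_eq : g = fun t ↦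
        (W p - slope W p q * p) * φ t + slope W p q * (t * φ t) - W t * φ t := by
      funext t
      simp only [hg, secantLine]
      ring
    rw [hg_eq, integral_sub, integral_add, integral_const_mul, integral_const_mul, hφ, htφ, hWφ]
    · ring
    all_goals exact (by fun_prop : ContinuousOn _ _).intervalIntegrable_of_Icc hab.le
  intro t ht
  rcases eq_or_ne t p with rfl | htp
  · simp
  rcases eq_or_ne t q with rfl | htq
  · simp [hpq.ne]
  have hφt : φ t ≠ 0 := fun h ↦ (hφ_eq_zero t ht h).elim htp htq
  have := (hg_cont.eqOn_zero_of_integral_eq_zero hab hg_nonneg hg_int) ht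
  simp only [hg, Pi.zero_apply, mul_eq_zero, hφt, or_false, sub_eq_zero] at this
  exact this.symm

/-- If `W` is concave on `[0,π]` (continuous up to the endpoints) and
`∫₀^π W cos² = ∫₀^π W sin²`, then `W` is affine on `[0,π]`. -/
theorem concave_equal_moments_affine
    (W : ℝ → ℝ)
    (hWconc : ConcaveOn ℝ (Set.Icc 0 Real.pi) W)
    (hWcont : ContinuousOn W (Set.Icc 0 Real.pi))
    (h : ∫ t in (0:ℝ)..Real.pi, W t * Real.cos t ^ 2 =
         ∫ t in (0:ℝ)..Real.pi, W t * Real.sin t ^ 2) :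
    ∃ α β : ℝ, ∀ t ∈ Set.Icc 0 Real.pi, W t = α * t + β := by
  have hπ := pi_pos
  have hWcos : ∫ t in (0:ℝ)..π, W t * cos (2 * t) = 0 := by
    simp_rw [cos_two_mul', mul_sub]
    rw [integral_sub, h, sub_self] <;>
      exact (by fun_prop : ContinuousOn _ _).intervalIntegrable_of_Icc hπ.le
  have hsecant := hWconc.eqOn_secantLine_of_integral_mul_eq_zero (p := π / 4) (q := 3 * π / 4)
    hWcont (by fun_prop) ⟨by positivity, by linarith⟩ ⟨by positivity, by linarith⟩ (by linarith)
    (fun t ht ↦ cos_two_mul_mul_nonneg ht) (fun t ht ↦ eq_or_eq_of_cos_two_mul_eq_zero ht)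
    integral_cos_two_mul integral_mul_cos_two_mul hWcos
  refine ⟨slope W (π / 4) (3 * π / 4), W (π / 4) - slope W (π / 4) (3 * π / 4) * (π / 4),
    fun t ht ↦ ?_⟩
  rw [hsecant ht, secantLine]
  ring
end

section
/- Let w(x) = x⁴ on [0,1]. For every constant C > 0 there exists a function f ∈ C²[0,1] with f(0) = f(1) = 0, f not identically zero, such that (∫₀¹ w(x) f'(x)² dx)² > C · (∫₀¹ w(x) f(x)² dx) · (∫₀¹ w(x) f''(x)² dx). In particular, the weighted Hardy–Littlewood inequality fails with every finite constant for the convex weight w(x) = x⁴, so neither the concavity hypothesis of the main theorem can be removed nor does a corresponding result hold for convex weights. -/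
/-! The witnesses are `f m x = (1 - x) - (1 - x) ^ (m + 2)`. Their second derivative
`-(m + 1) (m + 2) (1 - x) ^ m` is concentrated within `1/m` of `0`, where the weight `x⁴` is of
order `m⁻⁴`, so `∫ x⁴ f''² = O(1/m)`. Meanwhile `f' → -1` and `f` stays bounded, so
`∫ x⁴ f'² ≥ 1/15` and `∫ x⁴ f² ≤ 1/5`. The integrals reduce to Beta integrals
`∫₀¹ xᵃ (1 - x)ᵇ = a! b! / (a + b + 1)!`, computed by induction on `a` from
`xᵃ⁺¹ (1 - x)ᵇ = xᵃ (1 - x)ᵇ - xᵃ (1 - x)ᵇ⁺¹`. -/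

open intervalIntegral Nat

theorem integral_one_sub_pow (b : ℕ) : ∫ x in (0:ℝ)..1, (1 - x) ^ b = 1 / (b + 1) := by
  rw [integral_comp_sub_left (fun x => x ^ b), integral_pow]
  norm_num

theorem integral_pow_mul_one_sub_pow (a b : ℕ) :
    ∫ x in (0:ℝ)..1, x ^ a * (1 - x) ^ b = (a ! * b ! / (a + b + 1)! : ℝ) := by
  induction a generalizing b with
  | zero => simp [integral_one_sub_pow, factorial_succ]; field_simp
  | succ a ih =>
    have split : ∀ x : ℝ,
        x ^ (a + 1) * (1 - x) ^ b = x ^ a * (1 - x) ^ b - x ^ a * (1 - x) ^ (b + 1) :=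
      fun x => by ring
    simp_rw [split]
    rw [integral_sub (by apply Continuous.intervalIntegrable; fun_prop)
      (by apply Continuous.intervalIntegrable; fun_prop), ih, ih,
      show a + (b + 1) + 1 = a + b + 1 + 1 by ring, show a + 1 + b + 1 = a + b + 1 + 1 by ring]
    push_cast [factorial_succ]
    field_simp
    ring

theorem integral_pow_four_mul_one_sub_pow (k : ℕ) : (∫ x in (0:ℝ)..1, x ^ 4 * (1 - x) ^ k) =
    24 / (((k : ℝ) + 1) * (k + 2) * (k + 3) * (k + 4) * (k + 5)) := by
  rw [integral_pow_mul_one_sub_pow, show 4 + k + 1 = k + 5 by ring]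
  push_cast [factorial_succ]
  field_simp
  ring

theorem hasDerivAt_one_sub_pow_succ (n : ℕ) (x : ℝ) :
    HasDerivAt (fun x : ℝ => (1 - x) ^ (n + 1)) (-((n + 1) * (1 - x) ^ n)) x := by
  refine (((hasDerivAt_id x).const_sub 1).fun_pow (n + 1)).congr_deriv ?_
  push_cast [id]
  ring

noncomputable def weightedSq (g : ℝ → ℝ) : ℝ := ∫ x in (0:ℝ)..1, x ^ 4 * g x ^ 2

theorem weightedSq_nonneg (g : ℝ → ℝ) : 0 ≤ weightedSq g :=
  integral_nonneg zero_le_one fun x _ => by positivity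

namespace ConvexWeightWitness

variable (m : ℕ)

noncomputable def f (x : ℝ) : ℝ := (1 - x) - (1 - x) ^ (m + 2)

noncomputable def f' (x : ℝ) : ℝ := (m + 2) * (1 - x) ^ (m + 1) - 1

noncomputable def f'' (x : ℝ) : ℝ := -((m + 1) * (m + 2) * (1 - x) ^ m)

theorem hasDerivAt_f (x : ℝ) : HasDerivAt (f m) (f' m x) x := by
  refine (((hasDerivAt_id x).const_sub 1).sub
    (hasDerivAt_one_sub_pow_succ (m + 1) x)).congr_deriv ?_
  simp only [f']
  push_cast
  ring

theorem hasDerivAt_f' (x : ℝ) : HasDerivAt (f' m) (f'' m x) x := by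
  refine (((hasDerivAt_one_sub_pow_succ m x).const_mul ((m : ℝ) + 2)).sub_const 1).congr_deriv
    ?_
  simp only [f'']
  ring

theorem continuous_f'' : Continuous (f'' m) := by
  unfold f''
  fun_prop

theorem f_zero : f m 0 = 0 := by simp [f]

theorem f_one : f m 1 = 0 := by simp [f]

theorem f_half_ne_zero : f m (1 / 2) ≠ 0 := by
  have : ((1 : ℝ) / 2) ^ (m + 2) < (1 / 2) ^ 1 :=
    pow_lt_pow_right_of_lt_one₀ (by norm_num) (by norm_num) (by omega)
  norm_num [f] at this ⊢
  linarith

theorem weightedSq_f_le : weightedSq (f m) ≤ 1 / 5 := by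
  calc weightedSq (f m) ≤ ∫ x in (0:ℝ)..1, x ^ 4 * (1 - x) ^ 0 := by
        refine integral_mono_on zero_le_one
          (by apply Continuous.intervalIntegrable; unfold f; fun_prop)
          (by apply Continuous.intervalIntegrable; fun_prop) fun x ⟨hx0, hx1⟩ => ?_
        have hpow : (1 - x) ^ (m + 2) ≤ 1 - x :=
          pow_le_of_le_one (by linarith) (by linarith) (by omega)
        have : f m x ^ 2 ≤ 1 := by
          simp only [f]
          nlinarith [pow_nonneg (sub_nonneg.2 hx1) (m + 2)]
        simpa using mul_le_mul_of_nonneg_left this (by positivity : (0:ℝ) ≤ x ^ 4)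
    _ = 1 / 5 := by norm_num [integral_pow_four_mul_one_sub_pow]

/-- Pointwise `f'² ≥ 1 - 2 (m + 2) (1 - x) ^ (m + 1)`, and the second term integrates against
`x⁴` to at most `2/15`. -/
theorem one_div_fifteen_le_weightedSq_f' : 1 / 15 ≤ weightedSq (f' m) := by
  have hM : (0 : ℝ) ≤ m := m.cast_nonneg
  have cross : 2 * ((m : ℝ) + 2) * ∫ x in (0:ℝ)..1, x ^ 4 * (1 - x) ^ (m + 1) ≤ 2 / 15 := by
    rw [integral_pow_four_mul_one_sub_pow, mul_div_assoc',
      div_le_div_iff₀ (by positivity) (by norm_num)]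
    push_cast
    nlinarith [mul_nonneg hM hM, mul_nonneg (mul_nonneg hM hM) hM,
      mul_nonneg (mul_nonneg (mul_nonneg hM hM) hM) hM]
  calc 1 / 15 ≤ (∫ x in (0:ℝ)..1, x ^ 4 * (1 - x) ^ 0)
        - 2 * ((m : ℝ) + 2) * ∫ x in (0:ℝ)..1, x ^ 4 * (1 - x) ^ (m + 1) := by
        rw [integral_pow_four_mul_one_sub_pow 0]
        norm_num
        linarith
    _ = ∫ x in (0:ℝ)..1,
          x ^ 4 * (1 - x) ^ 0 - 2 * ((m : ℝ) + 2) * (x ^ 4 * (1 - x) ^ (m + 1)) := by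
        rw [integral_sub, integral_const_mul] <;>
          apply Continuous.intervalIntegrable <;> fun_prop
    _ ≤ weightedSq (f' m) := by
        refine integral_mono_on zero_le_one
          (by apply Continuous.intervalIntegrable; fun_prop)
          (by apply Continuous.intervalIntegrable; unfold f'; fun_prop) fun x _ => ?_
        have : 0 ≤ x ^ 4 * (((m : ℝ) + 2) * (1 - x) ^ (m + 1)) ^ 2 := by positivity
        simp only [f']
        nlinarith

theorem weightedSq_f''_eq : weightedSq (f'' m) = ((m + 1) * (m + 2)) ^ 2 *
    (24 / ((2 * m + 1) * (2 * m + 2) * (2 * m + 3) * (2 * m + 4) * (2 * m + 5))) := by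
  have : ∀ x : ℝ,
      x ^ 4 * f'' m x ^ 2 = ((m + 1) * (m + 2)) ^ 2 * (x ^ 4 * (1 - x) ^ (2 * m)) := by
    intro x
    simp only [f'', pow_mul']
    ring
  simp only [weightedSq, this, integral_const_mul, integral_pow_four_mul_one_sub_pow]
  push_cast
  ring_nf

theorem weightedSq_f''_le : weightedSq (f'' m) ≤ 6 / (2 * m + 5) := by
  have hM : (0 : ℝ) ≤ m := m.cast_nonneg
  rw [weightedSq_f''_eq, mul_div_assoc', div_le_div_iff₀ (by positivity) (by positivity)]
  nlinarith [mul_nonneg hM hM, mul_nonneg (mul_nonneg hM hM) hM,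
    mul_nonneg (mul_nonneg (mul_nonneg hM hM) hM) hM,
    mul_nonneg (mul_nonneg (mul_nonneg (mul_nonneg hM hM) hM) hM) hM]

end ConvexWeightWitness

open ConvexWeightWitness in
/-- For the convex weight `w x = x⁴` on `[0,1]`, no finite constant works:
for every `C > 0` there is `f ∈ C²[0,1]` with `f 0 = f 1 = 0`, `f ≢ 0`, and
`(∫₀¹ w f'²)² > C (∫₀¹ w f²)(∫₀¹ w f''²)`. -/
theorem convex_weight_counterexample :
    ∀ C : ℝ, 0 < C → ∃ f f' f'' : ℝ → ℝ,
      (∀ x ∈ Set.Icc (0:ℝ) 1, HasDerivWithinAt f (f' x) (Set.Icc (0:ℝ) 1) x) ∧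
      (∀ x ∈ Set.Icc (0:ℝ) 1, HasDerivWithinAt f' (f'' x) (Set.Icc (0:ℝ) 1) x) ∧
      ContinuousOn f'' (Set.Icc (0:ℝ) 1) ∧
      f 0 = 0 ∧ f 1 = 0 ∧ (∃ x ∈ Set.Icc (0:ℝ) 1, f x ≠ 0) ∧
      C * ((∫ x in (0:ℝ)..1, x ^ 4 * f x ^ 2) * (∫ x in (0:ℝ)..1, x ^ 4 * f'' x ^ 2)) <
        (∫ x in (0:ℝ)..1, x ^ 4 * f' x ^ 2) ^ 2 := by
  intro C hC
  obtain ⟨m, hm⟩ : ∃ m : ℕ, 135 * C ≤ m := ⟨⌈135 * C⌉₊, Nat.le_ceil _⟩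
  refine ⟨f m, f' m, f'' m, fun x _ => (hasDerivAt_f m x).hasDerivWithinAt,
    fun x _ => (hasDerivAt_f' m x).hasDerivWithinAt, (continuous_f'' m).continuousOn,
    f_zero m, f_one m, ⟨1 / 2, by norm_num, f_half_ne_zero m⟩, ?_⟩
  change C * (weightedSq (f m) * weightedSq (f'' m)) < weightedSq (f' m) ^ 2
  calc C * (weightedSq (f m) * weightedSq (f'' m)) ≤ C * (1 / 5 * (6 / (2 * m + 5))) := by
        gcongr
        · exact weightedSq_nonneg _
        · exact weightedSq_f_le m
        · exact weightedSq_f''_le m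
    _ < (1 / 15) ^ 2 := by
        field_simp
        linarith
    _ ≤ weightedSq (f' m) ^ 2 := by gcongr; exact one_div_fifteen_le_weightedSq_f' m
end

section
/- Let w(x) = 1 − x and f(x) = sin(πx/2) on [0,1]. Then (∫₀¹ w(x) f'(x)² dx)² = ((π² + 4)/(π² − 4))² · (∫₀¹ w(x) f(x)² dx) · (∫₀¹ w(x) f''(x)² dx); in particular, since ((π²+4)/(π²−4))² > 1, the inequality (∫₀¹ w f'²)² ≤ (∫₀¹ w f²)(∫₀¹ w f''²) fails for this concave but decreasing weight w even though f(0) = 0 and f'(1) = 0, showing that the monotonicity hypothesis in the corollary cannot be eliminated. -/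
/-!
Since `f'' = -(π/2)² f`, the three weighted integrals reduce, by the half-angle formulas, to
`∫₀¹ (1 - x) dx = 1/2` and `∫₀¹ (1 - x) cos (πx) dx = 2/π²`. This gives
`∫ w f² = 1/4 - 1/π²`, `∫ w f'² = (π/2)² (1/4 + 1/π²)` and `∫ w f''² = (π/2)⁴ ∫ w f²`,
so the quotient `(∫ w f'²)² / ((∫ w f²)(∫ w f''²))` is `((π² + 4)/(π² - 4))²`.
-/

open Real intervalIntegral

theorem deriv_sin_mul (a : ℝ) : deriv (fun x => sin (a * x)) = fun x => a * cos (a * x) := by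
  funext x
  rw [deriv_comp_mul_left (f := sin), Real.deriv_sin, smul_eq_mul]

theorem deriv_cos_mul (a : ℝ) : deriv (fun x => cos (a * x)) = fun x => -a * sin (a * x) := by
  funext x
  rw [deriv_comp_mul_left (f := cos), Real.deriv_cos', smul_eq_mul, neg_mul_comm]

theorem deriv_deriv_sin_mul (a : ℝ) :
    deriv (deriv fun x => sin (a * x)) = fun x => -a ^ 2 * sin (a * x) := by
  funext x
  rw [deriv_sin_mul, deriv_const_mul_field', deriv_cos_mul]
  ring

theorem integral_one_sub : ∫ x in (0:ℝ)..1, (1 - x) = 1 / 2 := by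
  rw [integral_comp_sub_left (fun x => x)]
  norm_num

theorem integral_one_sub_mul_cos_mul {b : ℝ} (hb : b ≠ 0) :
    ∫ x in (0:ℝ)..1, (1 - x) * cos (b * x) = (1 - cos b) / b ^ 2 := by
  have antideriv : ∀ x ∈ Set.uIcc (0:ℝ) 1, HasDerivAt
      (fun y => (1 - y) * sin (b * y) / b - cos (b * y) / b ^ 2) ((1 - x) * cos (b * x)) x := by
    intro x _
    have hbx := (hasDerivAt_id' x).const_mul b
    refine ((((hasDerivAt_id' x).const_sub 1).mul hbx.sin).div_const b).sub
      (hbx.cos.div_const (b ^ 2)) |>.congr_deriv ?_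
    field_simp
    ring
  rw [integral_eq_sub_of_hasDerivAt antideriv (by apply Continuous.intervalIntegrable; fun_prop)]
  simp only [mul_one, mul_zero, sin_zero, cos_zero]
  ring

theorem integral_one_sub_mul_sin_mul_sq {a : ℝ} (ha : a ≠ 0) :
    ∫ x in (0:ℝ)..1, (1 - x) * sin (a * x) ^ 2 = 1 / 4 - (1 - cos (2 * a)) / (8 * a ^ 2) := by
  have half_angle (x : ℝ) :
      (1 - x) * sin (a * x) ^ 2 = (1 - x) / 2 - (1 - x) * cos (2 * a * x) / 2 := by
    rw [sin_sq_eq_half_sub, mul_assoc]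
    ring
  simp_rw [half_angle]
  rw [integral_sub (by apply Continuous.intervalIntegrable; fun_prop)
    (by apply Continuous.intervalIntegrable; fun_prop), integral_div, integral_div,
    integral_one_sub, integral_one_sub_mul_cos_mul (by positivity)]
  field_simp
  ring

theorem integral_one_sub_mul_cos_mul_sq {a : ℝ} (ha : a ≠ 0) :
    ∫ x in (0:ℝ)..1, (1 - x) * cos (a * x) ^ 2 = 1 / 4 + (1 - cos (2 * a)) / (8 * a ^ 2) := by
  have pythagoras (x : ℝ) : (1 - x) * cos (a * x) ^ 2 = (1 - x) - (1 - x) * sin (a * x) ^ 2 := by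
    rw [cos_sq']
    ring
  simp_rw [pythagoras]
  rw [integral_sub (by apply Continuous.intervalIntegrable; fun_prop)
    (by apply Continuous.intervalIntegrable; fun_prop), integral_one_sub,
    integral_one_sub_mul_sin_mul_sq ha]
  ring

theorem integral_mul_const_mul_sq (w g : ℝ → ℝ) (c a b : ℝ) :
    ∫ x in a..b, w x * (c * g x) ^ 2 = c ^ 2 * ∫ x in a..b, w x * g x ^ 2 := by
  simp_rw [mul_pow, mul_left_comm (w _)]
  exact integral_const_mul _ _

theorem integral_one_sub_mul_sin_pi_div_two_mul_sq :
    ∫ x in (0:ℝ)..1, (1 - x) * sin (π / 2 * x) ^ 2 = (π ^ 2 - 4) / (4 * π ^ 2) := by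
  rw [integral_one_sub_mul_sin_mul_sq (by positivity), mul_div_cancel₀ _ two_ne_zero, cos_pi]
  field_simp
  ring

theorem integral_one_sub_mul_cos_pi_div_two_mul_sq :
    ∫ x in (0:ℝ)..1, (1 - x) * cos (π / 2 * x) ^ 2 = (π ^ 2 + 4) / (4 * π ^ 2) := by
  rw [integral_one_sub_mul_cos_mul_sq (by positivity), mul_div_cancel₀ _ two_ne_zero, cos_pi]
  field_simp
  ring

/-- For `w x = 1 - x` and `f x = sin (πx/2)` on `[0,1]` (so `f 0 = 0` and
`f' 1 = 0`), one has `(∫₀¹ w f'²)² = ((π²+4)/(π²-4))² (∫₀¹ w f²)(∫₀¹ w f''²)`;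
since `((π²+4)/(π²-4))² > 1`, the Hardy–Littlewood inequality fails for this
concave but decreasing weight, so monotonicity cannot be dropped. -/
theorem decreasing_weight_counterexample
    (f : ℝ → ℝ) (hf : ∀ x, f x = Real.sin (Real.pi * x / 2)) :
    f 0 = 0 ∧ deriv f 1 = 0 ∧
    (∫ x in (0:ℝ)..1, (1 - x) * deriv f x ^ 2) ^ 2 =
      ((Real.pi ^ 2 + 4) / (Real.pi ^ 2 - 4)) ^ 2 *
        ((∫ x in (0:ℝ)..1, (1 - x) * f x ^ 2) *
          (∫ x in (0:ℝ)..1, (1 - x) * deriv (deriv f) x ^ 2)) ∧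
    1 < ((Real.pi ^ 2 + 4) / (Real.pi ^ 2 - 4)) ^ 2 ∧
    ¬ ((∫ x in (0:ℝ)..1, (1 - x) * deriv f x ^ 2) ^ 2 ≤
        (∫ x in (0:ℝ)..1, (1 - x) * f x ^ 2) *
          (∫ x in (0:ℝ)..1, (1 - x) * deriv (deriv f) x ^ 2)) := by
  obtain rfl : f = fun x => sin (π / 2 * x) := funext fun x => by rw [hf, mul_div_right_comm]
  rw [deriv_deriv_sin_mul, deriv_sin_mul]
  simp only [integral_mul_const_mul_sq, neg_sq, integral_one_sub_mul_sin_pi_div_two_mul_sq,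
    integral_one_sub_mul_cos_pi_div_two_mul_sq]
  have hπ : 0 < π ^ 2 - 4 := by nlinarith [pi_gt_three]
  have identity : ((π / 2) ^ 2 * ((π ^ 2 + 4) / (4 * π ^ 2))) ^ 2 =
      ((π ^ 2 + 4) / (π ^ 2 - 4)) ^ 2 *
        ((π ^ 2 - 4) / (4 * π ^ 2) * (((π / 2) ^ 2) ^ 2 * ((π ^ 2 - 4) / (4 * π ^ 2)))) := by
    field_simp
  have ratio_gt_one : 1 < ((π ^ 2 + 4) / (π ^ 2 - 4)) ^ 2 :=
    one_lt_pow₀ ((one_lt_div hπ).2 (by linarith)) two_ne_zero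
  refine ⟨by simp, by simp, identity, ratio_gt_one, ?_⟩
  rw [identity, not_le]
  exact lt_mul_of_one_lt_left (by positivity) ratio_gt_one
end
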